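/- arXiv:2207.13411 — 4 statements merged into one kernel-verified Lean document; each statement's English description precedes it below -/
import Mathlib

section
/- Assume the Christoffel symbols are symmetric: Γ^k_{iℓ} = Γ^k_{ℓi} (torsion-free case). Define (D_horiz u)(x,ξ) = Σ_i ψ^i ((∂u/∂x^i)(x,ξ) + Σ_{k,ℓ} Γ^k_{iℓ}(x) ξ_k (∂u/∂ξ_ℓ)(x,ξ) − Σ_{k,ℓ} Γ^k_{iℓ}(x) ψ^ℓ ψ̄_k u(x,ξ)) and (D_vert u)(x,ξ) = Σ_j ψ̄_j (∂u/∂ξ_j)(x,ξ). Then for every smooth u : ℝ^n × ℝ^n → A, the anticommutator satisfies D_horiz(D_vert u) + D_vert(D_horiz u) = Σ_i ∂²u/∂ξ_i∂x^i + Σ_{i,k,ℓ} Γ^k_{iℓ}(x) ξ_k ∂²u/∂ξ_i∂ξ_ℓ + Σ_{i,ℓ} Γ^i_{iℓ}(x) ∂u/∂ξ_ℓ − Σ_{i,j,ℓ} Γ^j_{iℓ}(x) ψ^i ψ̄_j ∂u/∂ξ_ℓ. (This is the identity {D_horiz, D_vert} = ∇_{∂/∂ξ_i} ∇_{(∂/∂x^i)^H}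 = ∇² in coordinates.) -/
set_option maxHeartbeats 1000000

noncomputable section

/-- The horizontal Dirac operator in local coordinates, acting on functions
`u : ℝ^n × ℝ^n → A`, where `Γ i ℓ k` encodes the Christoffel symbol `Γ^k_{iℓ}`. -/
def Dhoriz (n : ℕ) {A : Type*} [NormedRing A] [NormedAlgebra ℝ A]
    (ψ ψb : Fin n → A) (Γ : Fin n → Fin n → Fin n → (Fin n → ℝ) → ℝ)
    (u : (Fin n → ℝ) × (Fin n → ℝ) → A) :
    (Fin n → ℝ) × (Fin n → ℝ) → A :=
  fun p => ∑ i, ψ i *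
    (fderiv ℝ u p (Pi.single i 1, 0)
      + ∑ k, ∑ ℓ, (Γ i ℓ k p.1 * p.2 k) • fderiv ℝ u p (0, Pi.single ℓ 1)
      - ∑ k, ∑ ℓ, Γ i ℓ k p.1 • (ψ ℓ * (ψb k * u p)))

/-- The vertical Dirac operator: `(D_vert u)(x,ξ) = Σ_j ψ̄_j (∂u/∂ξ_j)(x,ξ)`. -/
def Dvert (n : ℕ) {A : Type*} [NormedRing A] [NormedAlgebra ℝ A]
    (ψb : Fin n → A) (u : (Fin n → ℝ) × (Fin n → ℝ) → A) :
    (Fin n → ℝ) × (Fin n → ℝ) → A :=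
  fun p => ∑ j, ψb j * fderiv ℝ u p (0, Pi.single j 1)

section Aux

variable {n : ℕ} {A : Type*} [NormedRing A] [NormedAlgebra ℝ A]

private lemma psb_psi (ψ ψb : Fin n → A)
    (hmix : ∀ i j, ψ i * ψb j + ψb j * ψ i = if i = j then (1 : A) else 0)
    (i j : Fin n) (a : A) :
    ψb j * (ψ i * a) = (if i = j then a else 0) - ψ i * (ψb j * a) := by
  have h : ψb j * ψ i = (if i = j then (1 : A) else 0) - ψ i * ψb j :=
    eq_sub_of_add_eq (by rw [add_comm]; exact hmix i j)
  rw [← mul_assoc, h, sub_mul, ite_mul, one_mul, zero_mul, mul_assoc]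

private lemma psb_psb (ψb : Fin n → A)
    (hψbψb : ∀ i j, ψb i * ψb j = -(ψb j * ψb i)) (k j : Fin n) (a : A) :
    ψb k * (ψb j * a) = -(ψb j * (ψb k * a)) := by
  rw [← mul_assoc, hψbψb k j, neg_mul, mul_assoc]

private lemma sum4_comm {β : Type*} [AddCommMonoid β]
    (f : Fin n → Fin n → Fin n → Fin n → β) :
    ∑ j, ∑ i, ∑ k, ∑ ℓ, f j i k ℓ = ∑ i, ∑ k, ∑ ℓ, ∑ j, f j i k ℓ := by
  rw [Finset.sum_comm]
  exact Finset.sum_congr rfl fun i _ => by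
    rw [Finset.sum_comm]
    exact Finset.sum_congr rfl fun k _ => Finset.sum_comm

private lemma key_alg (ψ ψb : Fin n → A)
    (hψbψb : ∀ i j, ψb i * ψb j = -(ψb j * ψb i))
    (hmix : ∀ i j, ψ i * ψb j + ψb j * ψ i = if i = j then (1 : A) else 0)
    (G : Fin n → Fin n → Fin n → ℝ) (hsymG : ∀ i ℓ k, G i ℓ k = G ℓ i k)
    (ξ : Fin n → ℝ) (M S : Fin n → Fin n → A) (hS : ∀ i j, S i j = S j i)
    (V : Fin n → A) :
    (∑ i, ψ i * ((∑ j, ψb j * M i j)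
        + ∑ k, ∑ ℓ, (G i ℓ k * ξ k) • (∑ j, ψb j * S ℓ j)
        - ∑ k, ∑ ℓ, G i ℓ k • (ψ ℓ * (ψb k * ∑ j, ψb j * V j))))
    + ∑ j, ψb j * ∑ i, ψ i * (M i j
        + ∑ k, ∑ ℓ, ((G i ℓ k * ξ k) • S j ℓ
            + (if k = j then G i ℓ k • V ℓ else 0))
        - ∑ k, ∑ ℓ, G i ℓ k • (ψ ℓ * (ψb k * V j)))
    = (∑ i, M i i) + (∑ i, ∑ k, ∑ ℓ, (G i ℓ k * ξ k) • S i ℓ)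
      + (∑ i, ∑ ℓ, G i ℓ i • V ℓ)
      - ∑ i, ∑ j, ∑ ℓ, G i ℓ j • (ψ i * (ψb j * V ℓ)) := by
  have h1 : (∑ i, ∑ j, ψ i * (ψb j * M i j)) + (∑ j, ∑ i, ψb j * (ψ i * M i j))
      = ∑ i, M i i := by
    rw [Finset.sum_comm (s := Finset.univ) (t := Finset.univ)
      (f := fun i j => ψ i * (ψb j * M i j)), ← Finset.sum_add_distrib]
    refine Finset.sum_congr rfl fun j _ => ?_
    rw [← Finset.sum_add_distrib]
    calc ∑ i, (ψ i * (ψb j * M i j) + ψb j * (ψ i * M i j))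
        = ∑ i, (if i = j then M i j else 0) :=
          Finset.sum_congr rfl fun i _ => by
            rw [← mul_assoc, ← mul_assoc, ← add_mul, hmix i j, ite_mul, one_mul, zero_mul]
      _ = M j j := by rw [Finset.sum_ite_eq']; simp
  have h2 : (∑ i, ∑ k, ∑ ℓ, ∑ j, (G i ℓ k * ξ k) • (ψ i * (ψb j * S ℓ j)))
      + (∑ j, ∑ i, ∑ k, ∑ ℓ, (G i ℓ k * ξ k) • (ψb j * (ψ i * S j ℓ)))
      = ∑ i, ∑ k, ∑ ℓ, (G i ℓ k * ξ k) • S i ℓ := by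
    rw [sum4_comm (fun j i k ℓ => (G i ℓ k * ξ k) • (ψb j * (ψ i * S j ℓ))),
      ← Finset.sum_add_distrib]
    refine Finset.sum_congr rfl fun i _ => ?_
    rw [← Finset.sum_add_distrib]
    refine Finset.sum_congr rfl fun k _ => ?_
    rw [← Finset.sum_add_distrib]
    refine Finset.sum_congr rfl fun ℓ _ => ?_
    rw [← Finset.sum_add_distrib]
    calc ∑ j, ((G i ℓ k * ξ k) • (ψ i * (ψb j * S ℓ j))
            + (G i ℓ k * ξ k) • (ψb j * (ψ i * S j ℓ)))
        = ∑ j, (if i = j then (G i ℓ k * ξ k) • S ℓ j else 0) :=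
          Finset.sum_congr rfl fun j _ => by
            rw [hS j ℓ, ← smul_add, ← mul_assoc, ← mul_assoc, ← add_mul, hmix i j,
              ite_mul, one_mul, zero_mul]
            split <;> simp
      _ = (G i ℓ k * ξ k) • S i ℓ := by rw [Finset.sum_ite_eq]; simp [hS ℓ i]
  -- names for the pieces of the remaining combination
  have hb2' : (∑ j, ∑ i, ∑ k, ∑ ℓ,
        if k = j then G i ℓ k • (ψb j * (ψ i * V ℓ)) else 0)
      = (∑ i, ∑ ℓ, G i ℓ i • V ℓ)
        - ∑ i, ∑ j, ∑ ℓ, G i ℓ j • (ψ i * (ψb j * V ℓ)) := by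
    rw [sum4_comm (fun j i k ℓ => if k = j then G i ℓ k • (ψb j * (ψ i * V ℓ)) else 0)]
    have step1 : ∀ i k ℓ, (∑ j, if k = j then G i ℓ k • (ψb j * (ψ i * V ℓ)) else 0)
        = G i ℓ k • (ψb k * (ψ i * V ℓ)) := by
      intro i k ℓ; rw [Finset.sum_ite_eq]; simp
    simp only [step1]
    have step2 : ∀ i k ℓ, G i ℓ k • (ψb k * (ψ i * V ℓ))
        = (if i = k then G i ℓ k • V ℓ else 0) - G i ℓ k • (ψ i * (ψb k * V ℓ)) := by
      intro i k ℓ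
      rw [psb_psi ψ ψb hmix i k (V ℓ), smul_sub]
      split <;> simp
    simp only [step2]
    simp only [Finset.sum_sub_distrib]
    congr 1
    refine Finset.sum_congr rfl fun i _ => ?_
    calc ∑ k, ∑ ℓ, (if i = k then G i ℓ k • V ℓ else 0)
        = ∑ k, (if i = k then ∑ ℓ, G i ℓ k • V ℓ else 0) :=
          Finset.sum_congr rfl fun k _ => by split <;> simp
      _ = ∑ ℓ, G i ℓ i • V ℓ := by rw [Finset.sum_ite_eq]; simp
  have ha3 : (∑ i, ∑ k, ∑ ℓ, ∑ j, G i ℓ k • (ψ i * (ψ ℓ * (ψb k * (ψb j * V j)))))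
      = -∑ i, ∑ k, ∑ ℓ, ∑ j, G i ℓ k • (ψ i * (ψ ℓ * (ψb j * (ψb k * V j)))) := by
    have : ∀ i k ℓ j, G i ℓ k • (ψ i * (ψ ℓ * (ψb k * (ψb j * V j))))
        = -(G i ℓ k • (ψ i * (ψ ℓ * (ψb j * (ψb k * V j))))) := by
      intro i k ℓ j
      rw [psb_psb ψb hψbψb k j (V j), mul_neg, mul_neg, smul_neg]
    simp only [this, Finset.sum_neg_distrib]
  have hb3 : (∑ j, ∑ i, ∑ k, ∑ ℓ, G i ℓ k • (ψb j * (ψ i * (ψ ℓ * (ψb k * V j)))))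
      = (∑ i, ∑ k, ∑ ℓ, G i ℓ k • (ψ ℓ * (ψb k * V i)))
        - (∑ i, ∑ k, ∑ ℓ, G i ℓ k • (ψ i * (ψb k * V ℓ)))
        + ∑ i, ∑ k, ∑ ℓ, ∑ j, G i ℓ k • (ψ i * (ψ ℓ * (ψb j * (ψb k * V j)))) := by
    rw [sum4_comm (fun j i k ℓ => G i ℓ k • (ψb j * (ψ i * (ψ ℓ * (ψb k * V j)))))]
    have step : ∀ i k ℓ j, G i ℓ k • (ψb j * (ψ i * (ψ ℓ * (ψb k * V j))))
        = ((if i = j then G i ℓ k • (ψ ℓ * (ψb k * V j)) else 0)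
            - (if ℓ = j then G i ℓ k • (ψ i * (ψb k * V j)) else 0))
          + G i ℓ k • (ψ i * (ψ ℓ * (ψb j * (ψb k * V j)))) := by
      intro i k ℓ j
      rw [psb_psi ψ ψb hmix i j (ψ ℓ * (ψb k * V j)),
        psb_psi ψ ψb hmix ℓ j (ψb k * V j)]
      split_ifs <;> simp [mul_sub, smul_sub] <;> abel
    simp only [step]
    simp only [Finset.sum_add_distrib, Finset.sum_sub_distrib]
    have c1 : (∑ i, ∑ k, ∑ ℓ, ∑ j, if i = j then G i ℓ k • (ψ ℓ * (ψb k * V j)) else 0)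
        = ∑ i, ∑ k, ∑ ℓ, G i ℓ k • (ψ ℓ * (ψb k * V i)) := by
      refine Finset.sum_congr rfl fun i _ => Finset.sum_congr rfl fun k _ =>
        Finset.sum_congr rfl fun ℓ _ => ?_
      rw [Finset.sum_ite_eq]; simp
    have c2 : (∑ i, ∑ k, ∑ ℓ, ∑ j, if ℓ = j then G i ℓ k • (ψ i * (ψb k * V j)) else 0)
        = ∑ i, ∑ k, ∑ ℓ, G i ℓ k • (ψ i * (ψb k * V ℓ)) := by
      refine Finset.sum_congr rfl fun i _ => Finset.sum_congr rfl fun k _ =>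
        Finset.sum_congr rfl fun ℓ _ => ?_
      rw [Finset.sum_ite_eq]; simp
    rw [c1, c2]
  have hq : (∑ i, ∑ k, ∑ ℓ, G i ℓ k • (ψ ℓ * (ψb k * V i)))
      = ∑ i, ∑ j, ∑ ℓ, G i ℓ j • (ψ i * (ψb j * V ℓ)) :=
    calc ∑ i, ∑ k, ∑ ℓ, G i ℓ k • (ψ ℓ * (ψb k * V i))
        = ∑ k, ∑ i, ∑ ℓ, G i ℓ k • (ψ ℓ * (ψb k * V i)) := Finset.sum_comm
      _ = ∑ k, ∑ i, ∑ ℓ, G ℓ i k • (ψ i * (ψb k * V ℓ)) :=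
          Finset.sum_congr rfl fun k _ => Finset.sum_comm
      _ = ∑ i, ∑ k, ∑ ℓ, G ℓ i k • (ψ i * (ψb k * V ℓ)) := Finset.sum_comm
      _ = ∑ i, ∑ j, ∑ ℓ, G i ℓ j • (ψ i * (ψb j * V ℓ)) :=
          Finset.sum_congr rfl fun i _ => Finset.sum_congr rfl fun k _ =>
            Finset.sum_congr rfl fun ℓ _ => by rw [hsymG ℓ i k]
  -- expand the left-hand side
  simp only [mul_add, mul_sub, mul_ite, mul_zero, Finset.mul_sum, mul_smul_comm,
    Finset.smul_sum, Finset.sum_add_distrib, Finset.sum_sub_distrib]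
  have h3 : (∑ j, ∑ i, ∑ k, ∑ ℓ,
        if k = j then G i ℓ k • (ψb j * (ψ i * V ℓ)) else 0)
      - (∑ i, ∑ k, ∑ ℓ, ∑ j, G i ℓ k • (ψ i * (ψ ℓ * (ψb k * (ψb j * V j)))))
      - (∑ j, ∑ i, ∑ k, ∑ ℓ, G i ℓ k • (ψb j * (ψ i * (ψ ℓ * (ψb k * V j)))))
      = (∑ i, ∑ ℓ, G i ℓ i • V ℓ)
        - ∑ i, ∑ j, ∑ ℓ, G i ℓ j • (ψ i * (ψb j * V ℓ)) := by
    rw [hb2', ha3, hb3, hq]; abel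
  trans ((∑ i, ∑ j, ψ i * (ψb j * M i j)) + (∑ j, ∑ i, ψb j * (ψ i * M i j)))
    + (((∑ i, ∑ k, ∑ ℓ, ∑ j, (G i ℓ k * ξ k) • (ψ i * (ψb j * S ℓ j)))
        + (∑ j, ∑ i, ∑ k, ∑ ℓ, (G i ℓ k * ξ k) • (ψb j * (ψ i * S j ℓ))))
      + ((∑ j, ∑ i, ∑ k, ∑ ℓ,
            if k = j then G i ℓ k • (ψb j * (ψ i * V ℓ)) else 0)
        - (∑ i, ∑ k, ∑ ℓ, ∑ j, G i ℓ k • (ψ i * (ψ ℓ * (ψb k * (ψb j * V j)))))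
        - (∑ j, ∑ i, ∑ k, ∑ ℓ, G i ℓ k • (ψb j * (ψ i * (ψ ℓ * (ψb k * V j)))))))
  · abel
  · rw [h1, h2, h3]; abel

private lemma hasFDerivAt_pd {E F : Type*} [NormedAddCommGroup E] [NormedSpace ℝ E]
    [NormedAddCommGroup F] [NormedSpace ℝ F] {u : E → F} (hu : ContDiff ℝ (⊤ : ℕ∞) u)
    (v p : E) :
    HasFDerivAt (fun q => fderiv ℝ u q v) ((fderiv ℝ (fderiv ℝ u) p).flip v) p := by
  have h1 : HasFDerivAt (fderiv ℝ u) (fderiv ℝ (fderiv ℝ u) p) p :=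
    (((contDiff_infty_iff_fderiv.mp hu).2.differentiable (by simp)) p).hasFDerivAt
  exact (ContinuousLinearMap.apply ℝ F v).hasFDerivAt.comp p h1

end Aux

/-- The anticommutator `{D_horiz, D_vert} = ∇_{∂/∂ξ_i} ∇_{(∂/∂x^i)^H} = ∇²` in
coordinates, for a torsion-free connection. -/
theorem anticommutator_Dhoriz_Dvert
    (n : ℕ) (hn : 1 ≤ n) {A : Type*} [NormedRing A] [NormedAlgebra ℝ A]
    (ψ ψb : Fin n → A)
    (hψψ : ∀ i j, ψ i * ψ j = -(ψ j * ψ i))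
    (hψbψb : ∀ i j, ψb i * ψb j = -(ψb j * ψb i))
    (hmix : ∀ i j, ψ i * ψb j + ψb j * ψ i = if i = j then (1 : A) else 0)
    (Γ : Fin n → Fin n → Fin n → (Fin n → ℝ) → ℝ)    -- `Γ i ℓ k` encodes `Γ^k_{iℓ}`
    (hΓ : ∀ i ℓ k, ContDiff ℝ (⊤ : ℕ∞) (Γ i ℓ k))
    (hsym : ∀ (x : Fin n → ℝ) i ℓ k, Γ i ℓ k x = Γ ℓ i k x)
    (u : (Fin n → ℝ) × (Fin n → ℝ) → A) (hu : ContDiff ℝ (⊤ : ℕ∞) u) :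
    ∀ p : (Fin n → ℝ) × (Fin n → ℝ),
      Dhoriz n ψ ψb Γ (Dvert n ψb u) p + Dvert n ψb (Dhoriz n ψ ψb Γ u) p
        = (∑ i, fderiv ℝ (fun q => fderiv ℝ u q (Pi.single i 1, 0)) p (0, Pi.single i 1))
          + (∑ i, ∑ k, ∑ ℓ, (Γ i ℓ k p.1 * p.2 k) •
              fderiv ℝ (fun q => fderiv ℝ u q (0, Pi.single ℓ 1)) p (0, Pi.single i 1))
          + (∑ i, ∑ ℓ, Γ i ℓ i p.1 • fderiv ℝ u p (0, Pi.single ℓ 1))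
          - (∑ i, ∑ j, ∑ ℓ, Γ i ℓ j p.1 •
              (ψ i * (ψb j * fderiv ℝ u p (0, Pi.single ℓ 1)))) := by
  intro p
  have hsymm : ∀ v w, fderiv ℝ (fderiv ℝ u) p v w = fderiv ℝ (fderiv ℝ u) p w v :=
    fun v w => (hu.contDiffAt.isSymmSndFDerivAt (by rw [minSmoothness_of_isRCLikeNormedField]; exact WithTop.coe_le_coe.mpr le_top)) v w
  have hud : Differentiable ℝ u := hu.differentiable (by simp)
  have hfd : ∀ v : (Fin n → ℝ) × (Fin n → ℝ),
      HasFDerivAt (fun q => fderiv ℝ u q v) ((fderiv ℝ (fderiv ℝ u) p).flip v) p :=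
    fun v => hasFDerivAt_pd hu v p
  have hres : ∀ v w : (Fin n → ℝ) × (Fin n → ℝ),
      fderiv ℝ (fun q => fderiv ℝ u q v) p w = fderiv ℝ (fderiv ℝ u) p w v :=
    fun v w => by rw [(hfd v).fderiv]; rfl
  -- derivative of `Dvert u`
  have hDv : HasFDerivAt (Dvert n ψb u)
      (∑ j, ψb j • ((fderiv ℝ (fderiv ℝ u) p).flip (0, Pi.single j 1))) p :=
    HasFDerivAt.fun_sum fun j _ => (hfd (0, Pi.single j 1)).const_mul (ψb j)
  have hDv_app : ∀ w, fderiv ℝ (Dvert n ψb u) p w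
      = ∑ j, ψb j * fderiv ℝ (fderiv ℝ u) p w (0, Pi.single j 1) := by
    intro w
    rw [hDv.fderiv]
    simp [ContinuousLinearMap.sum_apply, ContinuousLinearMap.smul_apply, smul_eq_mul]
  -- scalar building blocks
  have hGam : ∀ i ℓ k, HasFDerivAt (fun q : (Fin n → ℝ) × (Fin n → ℝ) => Γ i ℓ k q.1)
      ((fderiv ℝ (Γ i ℓ k) p.1).comp (ContinuousLinearMap.fst ℝ (Fin n → ℝ) (Fin n → ℝ))) p :=
    fun i ℓ k =>
      ((((hΓ i ℓ k).differentiable (by simp)) p.1).hasFDerivAt).comp p hasFDerivAt_fst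
  have hcoord : ∀ k : Fin n, HasFDerivAt (fun q : (Fin n → ℝ) × (Fin n → ℝ) => q.2 k)
      ((ContinuousLinearMap.proj k).comp (ContinuousLinearMap.snd ℝ (Fin n → ℝ) (Fin n → ℝ))) p :=
    fun k => ((ContinuousLinearMap.proj (R := ℝ) (φ := fun _ : Fin n => ℝ) k).comp
      (ContinuousLinearMap.snd ℝ (Fin n → ℝ) (Fin n → ℝ))).hasFDerivAt
  -- derivative of `Dhoriz u`
  have hDh0 := HasFDerivAt.fun_sum (fun (i : Fin n) (_ : i ∈ Finset.univ) =>
    (((hfd (Pi.single i 1, 0)).add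
        (HasFDerivAt.fun_sum fun (k : Fin n) (_ : k ∈ Finset.univ) =>
          HasFDerivAt.fun_sum fun (ℓ : Fin n) (_ : ℓ ∈ Finset.univ) =>
            ((hGam i ℓ k).mul (hcoord k)).smul (hfd (0, Pi.single ℓ 1)))).sub
      (HasFDerivAt.fun_sum fun (k : Fin n) (_ : k ∈ Finset.univ) =>
        HasFDerivAt.fun_sum fun (ℓ : Fin n) (_ : ℓ ∈ Finset.univ) =>
          (hGam i ℓ k).smul (((hud p).hasFDerivAt.const_mul (ψb k)).const_mul
            (ψ ℓ)))).const_mul (ψ i))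
  have hDh : HasFDerivAt (Dhoriz n ψ ψb Γ u) _ p := hDh0
  have hDh_app : ∀ j, fderiv ℝ (Dhoriz n ψ ψb Γ u) p (0, Pi.single j 1)
      = ∑ i, ψ i * (fderiv ℝ (fderiv ℝ u) p (0, Pi.single j 1) (Pi.single i 1, 0)
        + ∑ k, ∑ ℓ, ((Γ i ℓ k p.1 * p.2 k) •
              fderiv ℝ (fderiv ℝ u) p (0, Pi.single j 1) (0, Pi.single ℓ 1)
            + (if k = j then Γ i ℓ k p.1 • fderiv ℝ u p (0, Pi.single ℓ 1) else 0))
        - ∑ k, ∑ ℓ, Γ i ℓ k p.1 • (ψ ℓ * (ψb k * fderiv ℝ u p (0, Pi.single j 1)))) := by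
    intro j
    rw [hDh.fderiv]
    simp [ContinuousLinearMap.sum_apply, ContinuousLinearMap.smul_apply,
      ContinuousLinearMap.add_apply, ContinuousLinearMap.sub_apply,
      ContinuousLinearMap.comp_apply, ContinuousLinearMap.smulRight_apply,
      ContinuousLinearMap.proj_apply, ContinuousLinearMap.coe_fst',
      ContinuousLinearMap.coe_snd', ContinuousLinearMap.flip_apply,
      smul_eq_mul, Pi.single_apply]
  have hswap1 : ∀ (a b : Fin n → ℝ),
      fderiv ℝ (fderiv ℝ u) p (a, (0 : Fin n → ℝ)) ((0 : Fin n → ℝ), b)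
        = fderiv ℝ (fderiv ℝ u) p (0, b) (a, 0) := fun a b => hsymm _ _
  have e1 : Dhoriz n ψ ψb Γ (Dvert n ψb u) p
      = ∑ i, ψ i * ((∑ j, ψb j *
            fderiv ℝ (fderiv ℝ u) p (0, Pi.single j 1) (Pi.single i 1, 0))
        + ∑ k, ∑ ℓ, (Γ i ℓ k p.1 * p.2 k) • (∑ j, ψb j *
            fderiv ℝ (fderiv ℝ u) p (0, Pi.single ℓ 1) (0, Pi.single j 1))
        - ∑ k, ∑ ℓ, Γ i ℓ k p.1 •
            (ψ ℓ * (ψb k * ∑ j, ψb j * fderiv ℝ u p (0, Pi.single j 1)))) := by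
    simp only [Dhoriz, Dvert, hDv_app, hswap1]
  have e2 : Dvert n ψb (Dhoriz n ψ ψb Γ u) p
      = ∑ j, ψb j * ∑ i, ψ i *
          (fderiv ℝ (fderiv ℝ u) p (0, Pi.single j 1) (Pi.single i 1, 0)
        + ∑ k, ∑ ℓ, ((Γ i ℓ k p.1 * p.2 k) •
              fderiv ℝ (fderiv ℝ u) p (0, Pi.single j 1) (0, Pi.single ℓ 1)
            + (if k = j then Γ i ℓ k p.1 • fderiv ℝ u p (0, Pi.single ℓ 1) else 0))
        - ∑ k, ∑ ℓ, Γ i ℓ k p.1 •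
            (ψ ℓ * (ψb k * fderiv ℝ u p (0, Pi.single j 1)))) := by
    simp only [Dvert, hDh_app]
  rw [e1, e2]
  simp only [hres]
  exact key_alg ψ ψb hψbψb hmix (fun i ℓ k => Γ i ℓ k p.1)
    (fun i ℓ k => hsym p.1 i ℓ k) p.2
    (fun i j => fderiv ℝ (fderiv ℝ u) p (0, Pi.single j 1) (Pi.single i 1, 0))
    (fun a b => fderiv ℝ (fderiv ℝ u) p (0, Pi.single a 1) (0, Pi.single b 1))
    (fun a b => hsymm _ _)
    (fun j => fderiv ℝ u p (0, Pi.single j 1))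

end
end

section
/- There exist smooth functions a_j : V → ℝ and b^j_{kℓ} : V → ℝ (for j, k, ℓ ∈ {1,…,n}) such that for every smooth f : V × ℝ^n → ℝ and every (x, ξ) ∈ U × ℝ^n: Σ_i ∂²(f∘Φ)/∂x^i∂ξ_i (x, ξ) = [Σ_i ∂²f/∂x'^i∂ξ'_i + Σ_j a_j ∂f/∂ξ'_j + Σ_{j,k,ℓ} b^j_{kℓ} ξ'_j ∂²f/∂ξ'_k∂ξ'_ℓ] evaluated at Φ(x, ξ), where a_j and b^j_{kℓ} are evaluated at the first component φ(x). (Under a change of coordinates the Laplacian Δ = ∂²/∂x^i∂ξ_i transforms into Δ plus a vertical first-order term with x-dependent coefficients plus a vertical second-order term with coefficients linear in ξ.) -/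
open scoped BigOperators

private lemma sum_mul_single {n : ℕ} (g : Fin n → ℝ) (i : Fin n) :
    ∑ p, g p * (Pi.single i (1:ℝ) : Fin n → ℝ) p = g i := by
  rw [Finset.sum_eq_single i]
  · simp
  · intro p _ hp; simp [Pi.single_apply, hp]
  · simp

private lemma pair_eq_sum {n : ℕ} (v w : Fin n → ℝ) :
    (v, w) = (∑ m, v m • ((Pi.single m 1 : Fin n → ℝ), (0 : Fin n → ℝ)))
      + (∑ m, w m • ((0 : Fin n → ℝ), (Pi.single m 1 : Fin n → ℝ))) := by
  have h1 : ∀ (u : Fin n → ℝ) (k : Fin n), (∑ m, u m • (Pi.single m 1 : Fin n → ℝ)) k = u k := by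
    intro u k
    rw [Finset.sum_apply, Finset.sum_eq_single k]
    · simp
    · intro p _ hp; simp [Pi.single_apply, hp]
    · simp
  have h2 : ∀ (u : Fin n → ℝ), (∑ m, u m • (Pi.single m 1 : Fin n → ℝ)) = u := by
    intro u; funext k; exact h1 u k
  rw [Prod.ext_iff]
  constructor
  · rw [Prod.fst_add, Prod.fst_sum, Prod.fst_sum]
    simp only [Prod.smul_fst, Prod.smul_snd, smul_zero, Finset.sum_const_zero, add_zero]
    exact (h2 v).symm
  · rw [Prod.snd_add, Prod.snd_sum, Prod.snd_sum]
    simp only [Prod.smul_fst, Prod.smul_snd, smul_zero, Finset.sum_const_zero, zero_add]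
    exact (h2 w).symm

private lemma clm_eval_pair {n : ℕ} (L : ((Fin n → ℝ) × (Fin n → ℝ)) →L[ℝ] ℝ)
    (v w : Fin n → ℝ) :
    L (v, w) = ∑ m, v m * L (Pi.single m 1, 0) + ∑ m, w m * L (0, Pi.single m 1) := by
  rw [pair_eq_sum v w, map_add, map_sum, map_sum]
  congr 1
  · refine Finset.sum_congr rfl fun m _ => ?_
    rw [map_smul]; simp
  · refine Finset.sum_congr rfl fun m _ => ?_
    rw [map_smul]; simp

private lemma contDiffOn_matrix_det {n : ℕ} {s : Set (Fin n → ℝ)}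
    (N : (Fin n → ℝ) → Matrix (Fin n) (Fin n) ℝ)
    (h : ∀ i j, ContDiffOn ℝ (⊤ : ℕ∞) (fun x => N x i j) s) :
    ContDiffOn ℝ (⊤ : ℕ∞) (fun x => (N x).det) s := by
  have : (fun x => (N x).det)
      = fun x => ∑ σ : Equiv.Perm (Fin n), (Equiv.Perm.sign σ : ℝ) * ∏ i, N x (σ i) i := by
    funext x; rw [Matrix.det_apply']
  rw [this]
  apply ContDiffOn.sum
  intro σ _
  exact (contDiffOn_const.mul (contDiffOn_prod fun i _ => h (σ i) i))

private lemma contDiffOn_inv_entry {n : ℕ} {s : Set (Fin n → ℝ)}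
    (N : (Fin n → ℝ) → Matrix (Fin n) (Fin n) ℝ)
    (h : ∀ i j, ContDiffOn ℝ (⊤ : ℕ∞) (fun x => N x i j) s)
    (hdet : ∀ x ∈ s, (N x).det ≠ 0) (k i : Fin n) :
    ContDiffOn ℝ (⊤ : ℕ∞) (fun x => (N x)⁻¹ k i) s := by
  have : (fun x => (N x)⁻¹ k i)
      = fun x => ((N x).det)⁻¹ * ((N x).updateRow i (Pi.single k 1)).det := by
    funext x
    rw [Matrix.inv_def, Ring.inverse_eq_inv, Matrix.smul_apply, Matrix.adjugate_apply,
      smul_eq_mul]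
  rw [this]
  refine ContDiffOn.mul ((contDiffOn_matrix_det N h).inv hdet) ?_
  apply contDiffOn_matrix_det
  intro a b
  by_cases hai : a = i
  · subst hai; simpa using contDiffOn_const
  · simp only [Matrix.updateRow_apply, hai, if_false]
    exact h a b

private lemma sum2_reorder {n : ℕ} (F : Fin n → Fin n → ℝ) :
    ∑ i, ∑ c, F i c = ∑ c, ∑ i, F i c := Finset.sum_comm

private lemma sum3_reorder {n : ℕ} (F : Fin n → Fin n → Fin n → ℝ) :
    ∑ i, ∑ c, ∑ m, F i c m = ∑ c, ∑ m, ∑ i, F i c m := by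
  have L : ∑ x : Fin n × Fin n × Fin n, F x.1 x.2.1 x.2.2
      = ∑ i, ∑ c, ∑ m, F i c m := by
    rw [Fintype.sum_prod_type]
    exact Finset.sum_congr rfl fun i _ => by rw [Fintype.sum_prod_type]
  have R : ∑ y : Fin n × Fin n × Fin n, F y.2.2 y.1 y.2.1
      = ∑ c, ∑ m, ∑ i, F i c m := by
    rw [Fintype.sum_prod_type]
    exact Finset.sum_congr rfl fun c _ => by rw [Fintype.sum_prod_type]
  rw [← L, ← R]
  exact Fintype.sum_equiv ⟨fun x => (x.2.1, x.2.2, x.1), fun y => (y.2.2, y.1, y.2.1),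
    fun x => rfl, fun y => rfl⟩ _ _ (fun x => rfl)

private lemma sum5_reorder {n : ℕ} (F : Fin n → Fin n → Fin n → Fin n → Fin n → ℝ) :
    ∑ i, ∑ c, ∑ m, ∑ p, ∑ j, F i c m p j = ∑ j, ∑ m, ∑ c, ∑ i, ∑ p, F i c m p j := by
  have L : ∑ x : Fin n × Fin n × Fin n × Fin n × Fin n,
      F x.1 x.2.1 x.2.2.1 x.2.2.2.1 x.2.2.2.2 = ∑ i, ∑ c, ∑ m, ∑ p, ∑ j, F i c m p j := by
    rw [Fintype.sum_prod_type]
    refine Finset.sum_congr rfl fun i _ => ?_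
    rw [Fintype.sum_prod_type]
    refine Finset.sum_congr rfl fun c _ => ?_
    rw [Fintype.sum_prod_type]
    refine Finset.sum_congr rfl fun m _ => ?_
    rw [Fintype.sum_prod_type]
  have R : ∑ y : Fin n × Fin n × Fin n × Fin n × Fin n,
      F y.2.2.2.1 y.2.2.1 y.2.1 y.2.2.2.2 y.1 = ∑ j, ∑ m, ∑ c, ∑ i, ∑ p, F i c m p j := by
    rw [Fintype.sum_prod_type]
    refine Finset.sum_congr rfl fun j _ => ?_
    rw [Fintype.sum_prod_type]
    refine Finset.sum_congr rfl fun m _ => ?_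
    rw [Fintype.sum_prod_type]
    refine Finset.sum_congr rfl fun c _ => ?_
    rw [Fintype.sum_prod_type]
  rw [← L, ← R]
  exact Fintype.sum_equiv
    ⟨fun x => (x.2.2.2.2, x.2.2.1, x.2.1, x.1, x.2.2.2.1),
     fun y => (y.2.2.2.1, y.2.2.1, y.2.1, y.2.2.2.2, y.1),
     fun x => rfl, fun y => rfl⟩ _ _ (fun x => rfl)

private lemma final_algebra {n : ℕ} (A M : Matrix (Fin n) (Fin n) ℝ)
    (dA : Fin n → Fin n → Fin n → ℝ) (G : Fin n → ℝ) (Hx Hξ : Fin n → Fin n → ℝ)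
    (ξ ξ' : Fin n → ℝ)
    (I1 : ∀ c m, ∑ i, A c i * M m i = if c = m then 1 else 0)
    (I2 : ∀ p, ξ p = ∑ j, M j p * ξ' j) :
    ∑ i, ∑ c, (A c i * ((∑ m, M m i * Hx c m) + ∑ m, (∑ p, ξ p * dA i m p) * Hξ c m)
        + G c * dA i c i)
    = ((∑ i, Hx i i) + (∑ j, (∑ i, dA i j i) * G j))
      + ∑ j, ∑ k, ∑ ℓ, (∑ i, ∑ p, A ℓ i * dA i k p * M j p) * ξ' j * Hξ ℓ k := by
  have split : ∑ i, ∑ c, (A c i * ((∑ m, M m i * Hx c m)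
        + ∑ m, (∑ p, ξ p * dA i m p) * Hξ c m) + G c * dA i c i)
      = (∑ i, ∑ c, A c i * ∑ m, M m i * Hx c m)
        + (∑ i, ∑ c, A c i * ∑ m, (∑ p, ξ p * dA i m p) * Hξ c m)
        + ∑ i, ∑ c, G c * dA i c i := by
    simp only [mul_add, Finset.sum_add_distrib]
  have e1 : (∑ i, ∑ c, A c i * ∑ m, M m i * Hx c m) = ∑ i, Hx i i := by
    simp only [Finset.mul_sum]
    rw [sum3_reorder (fun i c m => A c i * (M m i * Hx c m))]
    have inner : ∀ c m, ∑ i, A c i * (M m i * Hx c m) = (if c = m then 1 else 0) * Hx c m := by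
      intro c m
      have hre : ∑ i, A c i * (M m i * Hx c m) = ∑ i, (A c i * M m i) * Hx c m :=
        Finset.sum_congr rfl fun i _ => by ring
      rw [hre, ← Finset.sum_mul, I1 c m]
    simp only [inner, ite_mul, one_mul, zero_mul, Finset.sum_ite_eq, Finset.mem_univ, if_true]
  have e3 : (∑ i, ∑ c, G c * dA i c i) = ∑ j, (∑ i, dA i j i) * G j := by
    rw [sum2_reorder (fun i c => G c * dA i c i)]
    refine Finset.sum_congr rfl fun c _ => ?_
    rw [Finset.sum_mul]
    exact Finset.sum_congr rfl fun i _ => by ring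
  have e2 : (∑ i, ∑ c, A c i * ∑ m, (∑ p, ξ p * dA i m p) * Hξ c m)
      = ∑ j, ∑ k, ∑ ℓ, (∑ i, ∑ p, A ℓ i * dA i k p * M j p) * ξ' j * Hξ ℓ k := by
    have lhs5 : (∑ i, ∑ c, A c i * ∑ m, (∑ p, ξ p * dA i m p) * Hξ c m)
        = ∑ i, ∑ c, ∑ m, ∑ p, ∑ j, A c i * ((M j p * ξ' j) * dA i m p * Hξ c m) := by
      simp only [I2]
      simp only [Finset.sum_mul, Finset.mul_sum]
    have rhs5 : (∑ j, ∑ k, ∑ ℓ, (∑ i, ∑ p, A ℓ i * dA i k p * M j p) * ξ' j * Hξ ℓ k)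
        = ∑ j, ∑ k, ∑ ℓ, ∑ i, ∑ p, (A ℓ i * dA i k p * M j p) * ξ' j * Hξ ℓ k := by
      simp only [Finset.sum_mul]
    rw [lhs5, rhs5, sum5_reorder (fun i c m p j => A c i * ((M j p * ξ' j) * dA i m p * Hξ c m))]
    refine Finset.sum_congr rfl fun j _ => Finset.sum_congr rfl fun m _ =>
      Finset.sum_congr rfl fun c _ => Finset.sum_congr rfl fun i _ =>
      Finset.sum_congr rfl fun p _ => by ring
  rw [split, e1, e2, e3]; ring

private lemma contDiffOn_fderiv_eval {E F : Type*} [NormedAddCommGroup E] [NormedSpace ℝ E]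
    [NormedAddCommGroup F] [NormedSpace ℝ F] {g : E → F} {s : Set E}
    (hg : ContDiffOn ℝ (⊤ : ℕ∞) g s) (hs : IsOpen s) (v : E) :
    ContDiffOn ℝ (⊤ : ℕ∞) (fun x => fderiv ℝ g x v) s :=
  (ContinuousLinearMap.apply ℝ F v).contDiff.comp_contDiffOn (hg.fderiv_of_isOpen hs (by simp))

open Matrix

/-- Under a change of coordinates, the Laplacian `Δ = Σ_i ∂²/∂x^i∂ξ_i` on the
cotangent bundle transforms into `Δ` plus a vertical first-order term with
`x`-dependent coefficients plus a vertical second-order term whose coefficients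
are linear in `ξ`. -/
theorem laplacian_change_of_coordinates
    (n : ℕ) (hn : 1 ≤ n)
    (U V : Set (Fin n → ℝ)) (hU : IsOpen U) (hV : IsOpen V)
    (φ φinv : (Fin n → ℝ) → (Fin n → ℝ))
    (hφ : ContDiffOn ℝ (⊤ : ℕ∞) φ U) (hφinv : ContDiffOn ℝ (⊤ : ℕ∞) φinv V)
    (hmaps : Set.MapsTo φ U V) (hmaps' : Set.MapsTo φinv V U)
    (hleft : ∀ x ∈ U, φinv (φ x) = x) (hright : ∀ y ∈ V, φ (φinv y) = y)
    (hD : ∀ x ∈ U, IsUnit (fderiv ℝ φ x))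
    -- `M x` is the Jacobian matrix `Dφ(x)`
    (M : (Fin n → ℝ) → Matrix (Fin n) (Fin n) ℝ)
    (hM : ∀ x i j, M x i j = fderiv ℝ φ x (Pi.single j 1) i)
    -- the induced cotangent transition map `Φ(x, ξ) = (φ(x), ((Dφ(x))ᵀ)⁻¹ ξ)`
    (Φ : (Fin n → ℝ) × (Fin n → ℝ) → (Fin n → ℝ) × (Fin n → ℝ))
    (hΦ : ∀ x ξ, Φ (x, ξ) = (φ x, Matrix.mulVec ((M x).transpose)⁻¹ ξ)) :
    ∃ a : Fin n → (Fin n → ℝ) → ℝ,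
      ∃ b : Fin n → Fin n → Fin n → (Fin n → ℝ) → ℝ,
        (∀ j, ContDiffOn ℝ (⊤ : ℕ∞) (a j) V) ∧
        (∀ j k ℓ, ContDiffOn ℝ (⊤ : ℕ∞) (b j k ℓ) V) ∧
        ∀ f : (Fin n → ℝ) × (Fin n → ℝ) → ℝ,
          ContDiffOn ℝ (⊤ : ℕ∞) f (V ×ˢ (Set.univ : Set (Fin n → ℝ))) →
          ∀ x ∈ U, ∀ ξ : Fin n → ℝ,
            (∑ i, fderiv ℝ (fun q => fderiv ℝ (f ∘ Φ) q (0, Pi.single i 1)) (x, ξ)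
                (Pi.single i 1, 0))
            = (∑ i, fderiv ℝ (fun q => fderiv ℝ f q (0, Pi.single i 1)) (Φ (x, ξ))
                  (Pi.single i 1, 0))
              + (∑ j, a j (φ x) * fderiv ℝ f (Φ (x, ξ)) (0, Pi.single j 1))
              + (∑ j, ∑ k, ∑ ℓ, b j k ℓ (φ x) * (Φ (x, ξ)).2 j *
                  fderiv ℝ (fun q => fderiv ℝ f q (0, Pi.single ℓ 1)) (Φ (x, ξ))
                    (0, Pi.single k 1)) := by
  classical
  set A : (Fin n → ℝ) → Matrix (Fin n) (Fin n) ℝ := fun y => ((M y)ᵀ)⁻¹ with hAdef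
  have hΦeq : ∀ q : (Fin n → ℝ) × (Fin n → ℝ), Φ q = (φ q.1, (A q.1).mulVec q.2) :=
    fun q => hΦ q.1 q.2
  -- smoothness of the entries of `M` on `U`
  have hMent : ∀ i j, ContDiffOn ℝ (⊤ : ℕ∞) (fun y => M y i j) U := by
    intro i j
    exact ((ContinuousLinearMap.proj i : (Fin n → ℝ) →L[ℝ] ℝ).contDiff.comp_contDiffOn
      (contDiffOn_fderiv_eval hφ hU (Pi.single j 1))).congr fun y _ => (hM y i j)
  -- invertibility of `M` on `U`
  have hMdet : ∀ y ∈ U, IsUnit (M y).det := by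
    intro y hy
    obtain ⟨u, hu'⟩ := hD y hy
    have hMy : M y = LinearMap.toMatrix'
        ((fderiv ℝ φ y : (Fin n → ℝ) →L[ℝ] (Fin n → ℝ)) :
          (Fin n → ℝ) →ₗ[ℝ] (Fin n → ℝ)) := by
      ext i j
      rw [LinearMap.toMatrix'_apply, hM y i j]
      show (fderiv ℝ φ y) (Pi.single j 1) i
        = (fderiv ℝ φ y) (Pi.single j 1) i
      have hs : (Pi.single j 1 : Fin n → ℝ) = fun j' => if j' = j then 1 else 0 := by
        funext j'; simp [Pi.single_apply]
      rw [hs]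
    have hleftinv : (LinearMap.toMatrix'
          (((u⁻¹ : ((Fin n → ℝ) →L[ℝ] (Fin n → ℝ))ˣ) : (Fin n → ℝ) →L[ℝ] (Fin n → ℝ)) :
            (Fin n → ℝ) →ₗ[ℝ] (Fin n → ℝ))) * M y = 1 := by
      rw [hMy, ← LinearMap.toMatrix'_comp, ← ContinuousLinearMap.toLinearMap_comp, ← hu',
        ← ContinuousLinearMap.mul_def, u.inv_mul]
      rw [ContinuousLinearMap.one_def, ContinuousLinearMap.coe_id, LinearMap.toMatrix'_id]
    exact Matrix.isUnit_det_of_left_inverse hleftinv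
  have hATdet : ∀ y ∈ U, ((M y)ᵀ).det ≠ 0 := by
    intro y hy
    rw [Matrix.det_transpose]
    exact (hMdet y hy).ne_zero
  -- smoothness of the entries of `A` on `U`
  have hAent : ∀ k i, ContDiffOn ℝ (⊤ : ℕ∞) (fun y => A y k i) U := by
    intro k i
    exact contDiffOn_inv_entry (fun y => (M y)ᵀ) (fun a b => hMent b a) hATdet k i
  have hdAent : ∀ (i k p : Fin n), ContDiffOn ℝ (⊤ : ℕ∞)
      (fun y => fderiv ℝ (fun w => A w k p) y (Pi.single i 1)) U :=
    fun i k p => contDiffOn_fderiv_eval (hAent k p) hU (Pi.single i 1)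
  have hsub : V ⊆ φinv ⁻¹' U := fun y hy => hmaps' hy
  refine ⟨fun j y => ∑ i, fderiv ℝ (fun w => A w j i) (φinv y) (Pi.single i 1),
    fun j k ℓ y => ∑ i, ∑ p, A (φinv y) ℓ i *
      fderiv ℝ (fun w => A w k p) (φinv y) (Pi.single i 1) * M (φinv y) j p,
    ?_, ?_, ?_⟩
  · intro j
    exact ContDiffOn.sum fun i _ => (hdAent i j i).comp hφinv hsub
  · intro j k ℓ
    refine ContDiffOn.sum fun i _ => ContDiffOn.sum fun p _ => ?_
    exact (((hAent ℓ i).comp hφinv hsub).mul ((hdAent i k p).comp hφinv hsub)).mul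
      ((hMent j p).comp hφinv hsub)
  intro f hf x hx ξ
  have hWo : IsOpen (U ×ˢ (Set.univ : Set (Fin n → ℝ))) := hU.prod isOpen_univ
  have hW'o : IsOpen (V ×ˢ (Set.univ : Set (Fin n → ℝ))) := hV.prod isOpen_univ
  have hzW : ((x, ξ) : (Fin n → ℝ) × (Fin n → ℝ)) ∈ U ×ˢ (Set.univ : Set (Fin n → ℝ)) :=
    Set.mem_prod.mpr ⟨hx, trivial⟩
  have hΦmem : ∀ q ∈ U ×ˢ (Set.univ : Set (Fin n → ℝ)),
      Φ q ∈ V ×ˢ (Set.univ : Set (Fin n → ℝ)) := by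
    intro q hq
    rw [hΦeq q]
    exact Set.mem_prod.mpr ⟨hmaps (Set.mem_prod.mp hq).1, trivial⟩
  -- the derivative of `Φ`
  set DΦ : ((Fin n → ℝ) × (Fin n → ℝ)) →
      (((Fin n → ℝ) × (Fin n → ℝ)) →L[ℝ] ((Fin n → ℝ) × (Fin n → ℝ))) := fun q =>
    ((fderiv ℝ φ q.1).comp (ContinuousLinearMap.fst ℝ (Fin n → ℝ) (Fin n → ℝ))).prod
      (ContinuousLinearMap.pi fun m => ∑ p : Fin n,
        ((A q.1 m p) • ((ContinuousLinearMap.proj p).comp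
            (ContinuousLinearMap.snd ℝ (Fin n → ℝ) (Fin n → ℝ)))
          + (q.2 p) • ((fderiv ℝ (fun w => A w m p) q.1).comp
            (ContinuousLinearMap.fst ℝ (Fin n → ℝ) (Fin n → ℝ))))) with hDΦdef
  have hΦder : ∀ q ∈ U ×ˢ (Set.univ : Set (Fin n → ℝ)), HasFDerivAt Φ (DΦ q) q := by
    intro q hq
    have hq1 : q.1 ∈ U := (Set.mem_prod.mp hq).1
    have hΦfun : Φ = fun q => (φ q.1, (A q.1).mulVec q.2) := funext hΦeq
    rw [hΦfun]
    simp only [hDΦdef]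
    apply HasFDerivAt.prodMk
    · exact ((hφ.contDiffAt (hU.mem_nhds hq1)).differentiableAt
        (by simp)).hasFDerivAt.comp q hasFDerivAt_fst
    · apply hasFDerivAt_pi''
      intro m
      rw [ContinuousLinearMap.proj_pi]
      have hcoord : (fun q : (Fin n → ℝ) × (Fin n → ℝ) => ((A q.1).mulVec q.2) m)
          = fun q => ∑ p, A q.1 m p * q.2 p := by
        funext q
        simp [Matrix.mulVec, dotProduct]
      rw [show (fun q : (Fin n → ℝ) × (Fin n → ℝ) => (φ q.1, (A q.1).mulVec q.2).2 m)
          = fun q => ∑ p, A q.1 m p * q.2 p from hcoord]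
      refine HasFDerivAt.fun_sum fun p _ => ?_
      have h1 : HasFDerivAt (fun q : (Fin n → ℝ) × (Fin n → ℝ) => A q.1 m p)
          ((fderiv ℝ (fun w => A w m p) q.1).comp
            (ContinuousLinearMap.fst ℝ (Fin n → ℝ) (Fin n → ℝ))) q :=
        (((hAent m p).contDiffAt (hU.mem_nhds hq1)).differentiableAt
          (by simp)).hasFDerivAt.comp q hasFDerivAt_fst
      have h2 : HasFDerivAt (fun q : (Fin n → ℝ) × (Fin n → ℝ) => q.2 p)
          ((ContinuousLinearMap.proj p).comp
            (ContinuousLinearMap.snd ℝ (Fin n → ℝ) (Fin n → ℝ))) q :=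
        ((ContinuousLinearMap.proj p).comp
          (ContinuousLinearMap.snd ℝ (Fin n → ℝ) (Fin n → ℝ))).hasFDerivAt
      exact h1.mul h2
  -- evaluating `DΦ` on vertical and horizontal directions
  have hEval1 : ∀ (q : (Fin n → ℝ) × (Fin n → ℝ)) (i : Fin n),
      DΦ q ((0 : Fin n → ℝ), Pi.single i 1) = ((0 : Fin n → ℝ), fun m => A q.1 m i) := by
    intro q i
    simp only [hDΦdef]
    refine Prod.ext_iff.mpr ⟨?_, ?_⟩
    · simp
    · funext m
      simp only [ContinuousLinearMap.prod_apply, ContinuousLinearMap.pi_apply,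
        ContinuousLinearMap.sum_apply, ContinuousLinearMap.add_apply,
        ContinuousLinearMap.smul_apply, ContinuousLinearMap.comp_apply,
        ContinuousLinearMap.coe_fst', ContinuousLinearMap.coe_snd',
        ContinuousLinearMap.proj_apply, map_zero, smul_zero, add_zero, smul_eq_mul,
        mul_zero, zero_add]
      exact sum_mul_single (fun p => A q.1 m p) i
  have hEval2 : ∀ (q : (Fin n → ℝ) × (Fin n → ℝ)) (i : Fin n),
      DΦ q (Pi.single i 1, (0 : Fin n → ℝ)) = (fderiv ℝ φ q.1 (Pi.single i 1),
        fun m => ∑ p, q.2 p * fderiv ℝ (fun w => A w m p) q.1 (Pi.single i 1)) := by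
    intro q i
    simp only [hDΦdef]
    refine Prod.ext_iff.mpr ⟨?_, ?_⟩
    · simp
    · funext m
      simp only [ContinuousLinearMap.prod_apply, ContinuousLinearMap.pi_apply,
        ContinuousLinearMap.sum_apply, ContinuousLinearMap.add_apply,
        ContinuousLinearMap.smul_apply, ContinuousLinearMap.comp_apply,
        ContinuousLinearMap.coe_fst', ContinuousLinearMap.coe_snd',
        ContinuousLinearMap.proj_apply, Pi.zero_apply, smul_zero, zero_add, smul_eq_mul,
        mul_zero, add_zero]
  -- smoothness of the vertical derivatives of `f`
  have hGc : ∀ c : Fin n, ContDiffOn ℝ (⊤ : ℕ∞)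
      (fun p => fderiv ℝ f p ((0 : Fin n → ℝ), Pi.single c 1))
      (V ×ˢ (Set.univ : Set (Fin n → ℝ))) :=
    fun c => contDiffOn_fderiv_eval hf hW'o _
  -- the first-order formula
  have hstar : ∀ (i : Fin n), ∀ q ∈ U ×ˢ (Set.univ : Set (Fin n → ℝ)),
      fderiv ℝ (f ∘ Φ) q ((0 : Fin n → ℝ), Pi.single i 1)
      = ∑ c, A q.1 c i * fderiv ℝ f (Φ q) ((0 : Fin n → ℝ), Pi.single c 1) := by
    intro i q hq
    have hΦW' := hΦmem q hq
    have hfd : DifferentiableAt ℝ f (Φ q) :=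
      (hf.contDiffAt (hW'o.mem_nhds hΦW')).differentiableAt (by simp)
    have hΦd : DifferentiableAt ℝ Φ q := (hΦder q hq).differentiableAt
    rw [fderiv_comp q hfd hΦd, ContinuousLinearMap.comp_apply, (hΦder q hq).fderiv,
      hEval1 q i, clm_eval_pair (fderiv ℝ f (Φ q)) 0 (fun m => A q.1 m i)]
    simp only [Pi.zero_apply, zero_mul, Finset.sum_const_zero, zero_add]
  have hΦzW' : Φ (x, ξ) ∈ V ×ˢ (Set.univ : Set (Fin n → ℝ)) := hΦmem _ hzW
  have hGder : ∀ c : Fin n, DifferentiableAt ℝ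
      (fun p => fderiv ℝ f p ((0 : Fin n → ℝ), Pi.single c 1)) (Φ (x, ξ)) :=
    fun c => ((hGc c).contDiffAt (hW'o.mem_nhds hΦzW')).differentiableAt (by simp)
  -- the second-order formula, one direction at a time
  have hL : ∀ i : Fin n,
      fderiv ℝ (fun q => fderiv ℝ (f ∘ Φ) q (0, Pi.single i 1)) (x, ξ) (Pi.single i 1, 0)
      = ∑ c, (A x c i * ((∑ m, M x m i *
            fderiv ℝ (fun p => fderiv ℝ f p (0, Pi.single c 1)) (Φ (x, ξ)) (Pi.single m 1, 0))
          + ∑ m, (∑ p, ξ p * fderiv ℝ (fun w => A w m p) x (Pi.single i 1)) *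
            fderiv ℝ (fun p => fderiv ℝ f p (0, Pi.single c 1)) (Φ (x, ξ)) (0, Pi.single m 1))
        + fderiv ℝ f (Φ (x, ξ)) (0, Pi.single c 1) *
            fderiv ℝ (fun w => A w c i) x (Pi.single i 1)) := by
    intro i
    have hcong : (fun q => fderiv ℝ (f ∘ Φ) q ((0 : Fin n → ℝ), Pi.single i 1))
        =ᶠ[nhds (x, ξ)]
        fun q => ∑ c, A q.1 c i * fderiv ℝ f (Φ q) ((0 : Fin n → ℝ), Pi.single c 1) := by
      filter_upwards [hWo.mem_nhds hzW] with q hq using hstar i q hq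
    rw [hcong.fderiv_eq]
    have hRder : HasFDerivAt
        (fun q : (Fin n → ℝ) × (Fin n → ℝ) =>
          ∑ c, A q.1 c i * fderiv ℝ f (Φ q) ((0 : Fin n → ℝ), Pi.single c 1))
        (∑ c, ((A x c i) •
            ((fderiv ℝ (fun p => fderiv ℝ f p ((0 : Fin n → ℝ), Pi.single c 1))
              (Φ (x, ξ))).comp (DΦ (x, ξ)))
          + (fderiv ℝ f (Φ (x, ξ)) ((0 : Fin n → ℝ), Pi.single c 1)) •
            ((fderiv ℝ (fun w => A w c i) x).comp
              (ContinuousLinearMap.fst ℝ (Fin n → ℝ) (Fin n → ℝ)))))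
        (x, ξ) := by
      refine HasFDerivAt.fun_sum fun c _ => ?_
      have h1 : HasFDerivAt (fun q : (Fin n → ℝ) × (Fin n → ℝ) => A q.1 c i)
          ((fderiv ℝ (fun w => A w c i) x).comp
            (ContinuousLinearMap.fst ℝ (Fin n → ℝ) (Fin n → ℝ))) (x, ξ) :=
        (((hAent c i).contDiffAt (hU.mem_nhds hx)).differentiableAt
          (by simp)).hasFDerivAt.comp (x, ξ) (f := Prod.fst) hasFDerivAt_fst
      have h2 : HasFDerivAt (fun q : (Fin n → ℝ) × (Fin n → ℝ) =>
            fderiv ℝ f (Φ q) ((0 : Fin n → ℝ), Pi.single c 1))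
          ((fderiv ℝ (fun p => fderiv ℝ f p ((0 : Fin n → ℝ), Pi.single c 1))
            (Φ (x, ξ))).comp (DΦ (x, ξ))) (x, ξ) :=
        ((hGder c).hasFDerivAt).comp (x, ξ) (hΦder _ hzW)
      exact h1.mul h2
    rw [hRder.fderiv, ContinuousLinearMap.sum_apply]
    refine Finset.sum_congr rfl fun c _ => ?_
    rw [ContinuousLinearMap.add_apply, ContinuousLinearMap.smul_apply,
      ContinuousLinearMap.smul_apply, ContinuousLinearMap.comp_apply,
      ContinuousLinearMap.comp_apply, hEval2 (x, ξ) i,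
      clm_eval_pair (fderiv ℝ (fun p => fderiv ℝ f p ((0 : Fin n → ℝ), Pi.single c 1))
        (Φ (x, ξ)))]
    simp only [smul_eq_mul, ContinuousLinearMap.coe_fst']
    have hMplug : ∀ m : Fin n, (fderiv ℝ φ x) (Pi.single i 1) m = M x m i :=
      fun m => (hM x m i).symm
    simp only [hMplug]
  -- matrix identities
  have hdetMx : IsUnit ((M x)ᵀ).det := by
    rw [Matrix.det_transpose]; exact hMdet x hx
  have I1 : ∀ c m, ∑ i, A x c i * M x m i = if c = m then 1 else 0 := by
    intro c m
    have h1 : A x * (M x)ᵀ = 1 := Matrix.nonsing_inv_mul ((M x)ᵀ) hdetMx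
    calc ∑ i, A x c i * M x m i = ∑ i, A x c i * (M x)ᵀ i m := by
          simp [Matrix.transpose_apply]
      _ = (A x * (M x)ᵀ) c m := (Matrix.mul_apply).symm
      _ = (1 : Matrix (Fin n) (Fin n) ℝ) c m := by rw [h1]
      _ = if c = m then 1 else 0 := Matrix.one_apply
  have I2 : ∀ p, ξ p = ∑ j, M x j p * (Φ (x, ξ)).2 j := by
    intro p
    have h2 : (Φ (x, ξ)).2 = (A x).mulVec ξ := by rw [hΦeq (x, ξ)]
    rw [h2]
    have h3 : (M x)ᵀ.mulVec ((A x).mulVec ξ) = ξ := by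
      rw [Matrix.mulVec_mulVec,
        show (M x)ᵀ * A x = 1 from Matrix.mul_nonsing_inv ((M x)ᵀ) hdetMx,
        Matrix.one_mulVec]
    conv_lhs => rw [← h3]
    show ((M x)ᵀ.mulVec ((A x).mulVec ξ)) p = ∑ j, M x j p * ((A x).mulVec ξ) j
    simp [Matrix.mulVec, dotProduct, Matrix.transpose_apply]
  have halg := final_algebra (A x) (M x)
    (fun i k p => fderiv ℝ (fun w => A w k p) x (Pi.single i 1))
    (fun c => fderiv ℝ f (Φ (x, ξ)) (0, Pi.single c 1))
    (fun c m => fderiv ℝ (fun p => fderiv ℝ f p (0, Pi.single c 1)) (Φ (x, ξ))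
      (Pi.single m 1, 0))
    (fun c m => fderiv ℝ (fun p => fderiv ℝ f p (0, Pi.single c 1)) (Φ (x, ξ))
      (0, Pi.single m 1))
    ξ ((Φ (x, ξ)).2) I1 I2
  calc ∑ i, fderiv ℝ (fun q => fderiv ℝ (f ∘ Φ) q (0, Pi.single i 1)) (x, ξ)
        (Pi.single i 1, 0)
      = ∑ i, ∑ c, (A x c i * ((∑ m, M x m i *
            fderiv ℝ (fun p => fderiv ℝ f p (0, Pi.single c 1)) (Φ (x, ξ)) (Pi.single m 1, 0))
          + ∑ m, (∑ p, ξ p * fderiv ℝ (fun w => A w m p) x (Pi.single i 1)) *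
            fderiv ℝ (fun p => fderiv ℝ f p (0, Pi.single c 1)) (Φ (x, ξ)) (0, Pi.single m 1))
        + fderiv ℝ f (Φ (x, ξ)) (0, Pi.single c 1) *
            fderiv ℝ (fun w => A w c i) x (Pi.single i 1)) :=
        Finset.sum_congr rfl fun i _ => hL i
    _ = ((∑ i, fderiv ℝ (fun q => fderiv ℝ f q (0, Pi.single i 1)) (Φ (x, ξ))
            (Pi.single i 1, 0))
        + ∑ j, (∑ i, fderiv ℝ (fun w => A w j i) x (Pi.single i 1)) *
            fderiv ℝ f (Φ (x, ξ)) (0, Pi.single j 1))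
        + ∑ j, ∑ k, ∑ ℓ, (∑ i, ∑ p, A x ℓ i *
              fderiv ℝ (fun w => A w k p) x (Pi.single i 1) * M x j p) *
            (Φ (x, ξ)).2 j *
            fderiv ℝ (fun q => fderiv ℝ f q (0, Pi.single ℓ 1)) (Φ (x, ξ))
              (0, Pi.single k 1) := halg
    _ = _ := by
        beta_reduce
        rw [hleft x hx]
end

section
/- Let m ∈ ℕ and let v : Fin m → ℝ^n × ℝ^n be a list of vectors, each of which is either (e_j, 0) or (0, e_j) for some standard basis vector e_j of ℝ^n. For each j ∈ {1,…,n}, let a_j be the number of indices s with v(s) = (e_j, 0) and b_j the number of indices s with v(s) = (0, e_j). Then the m-th iterated Fréchet derivative of F at the point (0, 0), evaluated on the list of vectors v, equals ∏_{j=1}^{n} (−1)^{a_j} · a_j! · ε^{−a_j} if a_j = b_j for every j, and equals 0 otherwise. (This computes the contraction ⟨∂_x^α ∂_ξ^β exp(εΔ)⟩ for all multi-indices α, β: it vanishes unless α = β, in which case it equals (−1)^{|α|} α! ε^{−|α|}.) -/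
open scoped Classical
open Finset

namespace GPAux

noncomputable def gfun (n : ℕ) (ε : ℝ) (α β : Fin n → ℕ)
    (p : (Fin n → ℝ) × (Fin n → ℝ)) : ℝ :=
  (∏ j, p.1 j ^ α j) * (∏ j, p.2 j ^ β j) * Real.exp (-(∑ i, p.1 i * p.2 i) / ε)

noncomputable def cfac (ε : ℝ) (a b α β : ℕ) : ℝ :=
  if α ≤ a ∧ β ≤ b ∧ a - α = b - β then
    (a.factorial : ℝ) * b.factorial * (-ε⁻¹) ^ (a - α) / (a - α).factorial
  else 0

lemma contDiff_coord1 (n : ℕ) (j : Fin n) :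
    ContDiff ℝ ⊤ (fun p : (Fin n → ℝ) × (Fin n → ℝ) => p.1 j) :=
  (ContinuousLinearMap.contDiff ((ContinuousLinearMap.proj j).comp
    (ContinuousLinearMap.fst ℝ (Fin n → ℝ) (Fin n → ℝ))))

lemma contDiff_coord2 (n : ℕ) (j : Fin n) :
    ContDiff ℝ ⊤ (fun p : (Fin n → ℝ) × (Fin n → ℝ) => p.2 j) :=
  (ContinuousLinearMap.contDiff ((ContinuousLinearMap.proj j).comp
    (ContinuousLinearMap.snd ℝ (Fin n → ℝ) (Fin n → ℝ))))

lemma contDiff_gfun (n : ℕ) (ε : ℝ) (α β : Fin n → ℕ) :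
    ContDiff ℝ ⊤ (gfun n ε α β) := by
  unfold gfun
  refine ContDiff.mul (ContDiff.mul ?_ ?_) ?_
  · exact contDiff_prod fun j _ => (contDiff_coord1 n j).pow _
  · exact contDiff_prod fun j _ => (contDiff_coord2 n j).pow _
  · exact Real.contDiff_exp.comp
      (((ContDiff.sum fun i _ => (contDiff_coord1 n i).mul (contDiff_coord2 n i)).neg).div_const ε)

noncomputable def Lx (n : ℕ) (j : Fin n) : ((Fin n → ℝ) × (Fin n → ℝ)) →L[ℝ] ℝ :=
  (ContinuousLinearMap.proj j).comp (ContinuousLinearMap.fst ℝ (Fin n → ℝ) (Fin n → ℝ))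

noncomputable def Ly (n : ℕ) (j : Fin n) : ((Fin n → ℝ) × (Fin n → ℝ)) →L[ℝ] ℝ :=
  (ContinuousLinearMap.proj j).comp (ContinuousLinearMap.snd ℝ (Fin n → ℝ) (Fin n → ℝ))

lemma prod_pow_update (n : ℕ) (y : Fin n → ℝ) (α : Fin n → ℕ) (i : Fin n) (c : ℕ) :
    ∏ j, y j ^ (Function.update α i c j) = y i ^ c * ∏ j ∈ univ.erase i, y j ^ α j := by
  rw [← Finset.mul_prod_erase univ _ (mem_univ i), Function.update_self]
  congr 1
  exact Finset.prod_congr rfl fun j hj => by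
    rw [Function.update_of_ne (Finset.ne_of_mem_erase hj)]

lemma fderiv_gfun_H (n : ℕ) (ε : ℝ) (α β : Fin n → ℕ) (i : Fin n)
    (y : (Fin n → ℝ) × (Fin n → ℝ)) :
    fderiv ℝ (gfun n ε α β) y ((Pi.single i 1 : Fin n → ℝ), (0 : Fin n → ℝ))
      = (α i : ℝ) * gfun n ε (Function.update α i (α i - 1)) β y
        + (-ε⁻¹) * gfun n ε α (Function.update β i (β i + 1)) y := by
  have h1 : HasFDerivAt (fun p : (Fin n → ℝ) × (Fin n → ℝ) => ∏ j, p.1 j ^ α j)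
      (∑ j, (∏ k ∈ univ.erase j, y.1 k ^ α k) •
        (((α j : ℝ) * y.1 j ^ (α j - 1)) • Lx n j)) y :=
    HasFDerivAt.finset_prod fun j _ =>
      (hasDerivAt_pow (α j) (y.1 j)).comp_hasFDerivAt y (Lx n j).hasFDerivAt
  have h2 : HasFDerivAt (fun p : (Fin n → ℝ) × (Fin n → ℝ) => ∏ j, p.2 j ^ β j)
      (∑ j, (∏ k ∈ univ.erase j, y.2 k ^ β k) •
        (((β j : ℝ) * y.2 j ^ (β j - 1)) • Ly n j)) y :=
    HasFDerivAt.finset_prod fun j _ =>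
      (hasDerivAt_pow (β j) (y.2 j)).comp_hasFDerivAt y (Ly n j).hasFDerivAt
  have hS : HasFDerivAt (fun p : (Fin n → ℝ) × (Fin n → ℝ) => ∑ i, p.1 i * p.2 i)
      (∑ i, (y.1 i • Ly n i + y.2 i • Lx n i)) y :=
    HasFDerivAt.fun_sum fun i _ => ((Lx n i).hasFDerivAt.mul (Ly n i).hasFDerivAt)
  have heq : (fun p : (Fin n → ℝ) × (Fin n → ℝ) => Real.exp (-(∑ i, p.1 i * p.2 i) / ε))
      = (fun p : (Fin n → ℝ) × (Fin n → ℝ) => Real.exp ((-ε⁻¹) * ∑ i, p.1 i * p.2 i)) := by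
    funext p; congr 1; ring
  have hE : HasFDerivAt
      (fun p : (Fin n → ℝ) × (Fin n → ℝ) => Real.exp (-(∑ i, p.1 i * p.2 i) / ε))
      (Real.exp ((-ε⁻¹) * ∑ i, y.1 i * y.2 i) •
        ((-ε⁻¹) • (∑ i, (y.1 i • Ly n i + y.2 i • Lx n i)))) y := by
    rw [heq]; exact (hS.const_mul (-ε⁻¹)).exp
  have H := ((h1.mul h2).mul hE).fderiv
  rw [show gfun n ε α β = ((fun p : (Fin n → ℝ) × (Fin n → ℝ) => ∏ j, p.1 j ^ α j) *
      (fun p : (Fin n → ℝ) × (Fin n → ℝ) => ∏ j, p.2 j ^ β j)) *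
      (fun p : (Fin n → ℝ) × (Fin n → ℝ) => Real.exp (-(∑ i, p.1 i * p.2 i) / ε))
    from by funext p; simp only [gfun, Pi.mul_apply], H]
  simp only [ContinuousLinearMap.add_apply, ContinuousLinearMap.smul_apply,
    ContinuousLinearMap.coe_sum', Finset.sum_apply, Lx, Ly, Pi.mul_apply,
    ContinuousLinearMap.coe_comp', Function.comp_apply, ContinuousLinearMap.proj_apply,
    ContinuousLinearMap.coe_fst', ContinuousLinearMap.coe_snd', smul_eq_mul,
    Pi.single_apply, Pi.zero_apply, mul_zero, zero_mul, add_zero, zero_add, mul_ite, mul_one,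
    Finset.sum_ite_eq', Finset.mem_univ, if_true]
  have he : Real.exp ((-∑ i, y.1 i * y.2 i) / ε)
      = Real.exp (-ε⁻¹ * ∑ i, y.1 i * y.2 i) := by congr 1; ring
  rw [gfun, gfun, prod_pow_update, prod_pow_update, he]
  rw [← Finset.mul_prod_erase univ (fun j => y.1 j ^ α j) (mem_univ i),
      ← Finset.mul_prod_erase univ (fun j => y.2 j ^ β j) (mem_univ i)]
  simp only [Finset.sum_const_zero, pow_succ]
  ring

lemma fderiv_gfun_V (n : ℕ) (ε : ℝ) (α β : Fin n → ℕ) (i : Fin n)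
    (y : (Fin n → ℝ) × (Fin n → ℝ)) :
    fderiv ℝ (gfun n ε α β) y ((0 : Fin n → ℝ), (Pi.single i 1 : Fin n → ℝ))
      = (β i : ℝ) * gfun n ε α (Function.update β i (β i - 1)) y
        + (-ε⁻¹) * gfun n ε (Function.update α i (α i + 1)) β y := by
  have h1 : HasFDerivAt (fun p : (Fin n → ℝ) × (Fin n → ℝ) => ∏ j, p.1 j ^ α j)
      (∑ j, (∏ k ∈ univ.erase j, y.1 k ^ α k) •
        (((α j : ℝ) * y.1 j ^ (α j - 1)) • Lx n j)) y :=
    HasFDerivAt.finset_prod fun j _ =>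
      (hasDerivAt_pow (α j) (y.1 j)).comp_hasFDerivAt y (Lx n j).hasFDerivAt
  have h2 : HasFDerivAt (fun p : (Fin n → ℝ) × (Fin n → ℝ) => ∏ j, p.2 j ^ β j)
      (∑ j, (∏ k ∈ univ.erase j, y.2 k ^ β k) •
        (((β j : ℝ) * y.2 j ^ (β j - 1)) • Ly n j)) y :=
    HasFDerivAt.finset_prod fun j _ =>
      (hasDerivAt_pow (β j) (y.2 j)).comp_hasFDerivAt y (Ly n j).hasFDerivAt
  have hS : HasFDerivAt (fun p : (Fin n → ℝ) × (Fin n → ℝ) => ∑ i, p.1 i * p.2 i)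
      (∑ i, (y.1 i • Ly n i + y.2 i • Lx n i)) y :=
    HasFDerivAt.fun_sum fun i _ => ((Lx n i).hasFDerivAt.mul (Ly n i).hasFDerivAt)
  have heq : (fun p : (Fin n → ℝ) × (Fin n → ℝ) => Real.exp (-(∑ i, p.1 i * p.2 i) / ε))
      = (fun p : (Fin n → ℝ) × (Fin n → ℝ) => Real.exp ((-ε⁻¹) * ∑ i, p.1 i * p.2 i)) := by
    funext p; congr 1; ring
  have hE : HasFDerivAt
      (fun p : (Fin n → ℝ) × (Fin n → ℝ) => Real.exp (-(∑ i, p.1 i * p.2 i) / ε))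
      (Real.exp ((-ε⁻¹) * ∑ i, y.1 i * y.2 i) •
        ((-ε⁻¹) • (∑ i, (y.1 i • Ly n i + y.2 i • Lx n i)))) y := by
    rw [heq]; exact (hS.const_mul (-ε⁻¹)).exp
  have H := ((h1.mul h2).mul hE).fderiv
  rw [show gfun n ε α β = ((fun p : (Fin n → ℝ) × (Fin n → ℝ) => ∏ j, p.1 j ^ α j) *
      (fun p : (Fin n → ℝ) × (Fin n → ℝ) => ∏ j, p.2 j ^ β j)) *
      (fun p : (Fin n → ℝ) × (Fin n → ℝ) => Real.exp (-(∑ i, p.1 i * p.2 i) / ε))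
    from by funext p; simp only [gfun, Pi.mul_apply], H]
  simp only [ContinuousLinearMap.add_apply, ContinuousLinearMap.smul_apply,
    ContinuousLinearMap.coe_sum', Finset.sum_apply, Lx, Ly, Pi.mul_apply,
    ContinuousLinearMap.coe_comp', Function.comp_apply, ContinuousLinearMap.proj_apply,
    ContinuousLinearMap.coe_fst', ContinuousLinearMap.coe_snd', smul_eq_mul,
    Pi.single_apply, Pi.zero_apply, mul_zero, zero_mul, add_zero, zero_add, mul_ite, mul_one,
    Finset.sum_ite_eq', Finset.mem_univ, if_true]
  have he : Real.exp ((-∑ i, y.1 i * y.2 i) / ε)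
      = Real.exp (-ε⁻¹ * ∑ i, y.1 i * y.2 i) := by congr 1; ring
  rw [gfun, gfun, prod_pow_update, prod_pow_update, he]
  rw [← Finset.mul_prod_erase univ (fun j => y.1 j ^ α j) (mem_univ i),
      ← Finset.mul_prod_erase univ (fun j => y.2 j ^ β j) (mem_univ i)]
  simp only [Finset.sum_const_zero, pow_succ]
  ring


lemma iter_rec {E' : Type*} [NormedAddCommGroup E'] [NormedSpace ℝ E'] {f : E' → ℝ}
    (hf : ContDiff ℝ ⊤ f) (m : ℕ) (x : E') (v : Fin (m + 1) → E') :
    iteratedFDeriv ℝ (m + 1) f x v =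
      iteratedFDeriv ℝ m (fun y => fderiv ℝ f y (v (Fin.last m))) x (Fin.init v) := by
  rw [iteratedFDeriv_succ_apply_right]
  have h : (fun y => fderiv ℝ f y (v (Fin.last m)))
      = (ContinuousLinearMap.apply ℝ ℝ (v (Fin.last m))) ∘ (fderiv ℝ f) := rfl
  rw [h, ContinuousLinearMap.iteratedFDeriv_comp_left _ (hf.fderiv_right le_top).contDiffAt le_top]
  rfl

lemma count_snoc {γ : Type*} [DecidableEq γ] (m : ℕ) (v : Fin (m + 1) → γ) (c : γ) :
    (univ.filter (fun s => v s = c)).card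
      = (univ.filter (fun s : Fin m => Fin.init v s = c)).card
        + (if v (Fin.last m) = c then 1 else 0) := by
  simp only [Finset.card_filter]
  rw [Fin.sum_univ_castSucc]
  rfl

lemma cfac_succ_left (ε : ℝ) (a b α β : ℕ) :
    cfac ε (a + 1) b α β
      = α * cfac ε a b (α - 1) β + (-ε⁻¹) * cfac ε a b α (β + 1) := by
  have hfa : ∀ k : ℕ, ((k.factorial : ℝ)) ≠ 0 := fun k =>
    Nat.cast_ne_zero.mpr k.factorial_ne_zero
  unfold cfac
  rcases α with _ | α'
  · simp only [Nat.cast_zero, zero_mul, zero_add, Nat.sub_zero, Nat.zero_le, true_and]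
    by_cases h : β ≤ b ∧ a + 1 = b - β
    · have h2 : β + 1 ≤ b ∧ a = b - (β + 1) := by omega
      rw [if_pos h, if_pos h2]
      generalize (-ε⁻¹ : ℝ) = x
      rw [Nat.factorial_succ, pow_succ]
      push_cast
      field_simp
    · have h2 : ¬ (β + 1 ≤ b ∧ a = b - (β + 1)) := by omega
      rw [if_neg h, if_neg h2, mul_zero]
  · by_cases h1 : α' ≤ a ∧ β ≤ b ∧ a - α' = b - β
    · have hc0 : α' + 1 ≤ a + 1 ∧ β ≤ b ∧ a + 1 - (α' + 1) = b - β := by omega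
      have hs : α' + 1 - 1 = α' := by omega
      have hd : a + 1 - (α' + 1) = a - α' := by omega
      by_cases h2 : α' + 1 ≤ a
      · have hc2 : α' + 1 ≤ a ∧ β + 1 ≤ b ∧ a - (α' + 1) = b - (β + 1) := by omega
        rw [if_pos hc0, hs, if_pos h1, if_pos hc2, hd]
        obtain ⟨k, hk⟩ : ∃ k, a - α' = k + 1 := ⟨a - α' - 1, by omega⟩
        have hk2 : a - (α' + 1) = k := by omega
        have ha2 : (a:ℝ) + 1 = (α' + 1) + (k + 1) := by
          have h' : a + 1 = (α' + 1) + (k + 1) := by omega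
          exact_mod_cast congrArg (Nat.cast (R := ℝ)) h'
        generalize (-ε⁻¹ : ℝ) = x
        rw [hk, hk2, Nat.factorial_succ a, Nat.factorial_succ k, pow_succ]
        push_cast
        rw [ha2]
        have hk1 : ((k : ℝ) + 1) ≠ 0 := by positivity
        field_simp
      · have hae : α' = a := by omega
        have hbe : β = b := by omega
        subst hae hbe
        have hc2 : ¬ (α' + 1 ≤ α' ∧ β + 1 ≤ β ∧ α' - (α' + 1) = β - (β + 1)) := by omega
        rw [if_pos hc0, hs, if_pos h1, if_neg hc2, hd, mul_zero, add_zero]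
        simp only [Nat.sub_self, pow_zero, Nat.factorial_zero]
        generalize (-ε⁻¹ : ℝ) = x
        rw [Nat.factorial_succ]
        push_cast
        field_simp
    · have hc0 : ¬ (α' + 1 ≤ a + 1 ∧ β ≤ b ∧ a + 1 - (α' + 1) = b - β) := by omega
      have hc2 : ¬ (α' + 1 ≤ a ∧ β + 1 ≤ b ∧ a - (α' + 1) = b - (β + 1)) := by omega
      have hc1 : ¬ (α' + 1 - 1 ≤ a ∧ β ≤ b ∧ a - (α' + 1 - 1) = b - β) := by omega
      rw [if_neg hc0, if_neg hc1, if_neg hc2, mul_zero, mul_zero, add_zero]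

lemma cfac_symm (ε : ℝ) (a b α β : ℕ) : cfac ε a b α β = cfac ε b a β α := by
  unfold cfac
  by_cases h : α ≤ a ∧ β ≤ b ∧ a - α = b - β
  · have h' : β ≤ b ∧ α ≤ a ∧ b - β = a - α := by omega
    rw [if_pos h, if_pos h', h.2.2]
    ring
  · have h' : ¬ (β ≤ b ∧ α ≤ a ∧ b - β = a - α) := by omega
    rw [if_neg h, if_neg h']

lemma cfac_succ_right (ε : ℝ) (a b α β : ℕ) :
    cfac ε a (b + 1) α β
      = β * cfac ε a b α (β - 1) + (-ε⁻¹) * cfac ε a b (α + 1) β := by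
  rw [cfac_symm, cfac_succ_left, cfac_symm ε a b, cfac_symm ε a b]


lemma single_ne (n : ℕ) (i j : Fin n) :
    ((Pi.single i 1 : Fin n → ℝ), (0 : Fin n → ℝ))
      ≠ ((0 : Fin n → ℝ), (Pi.single j 1 : Fin n → ℝ)) := by
  intro h
  have h1 := congrFun (congrArg Prod.fst h) i
  simp [Pi.single_eq_same] at h1

lemma single_eq_iff (n : ℕ) (i j : Fin n) :
    ((Pi.single i 1 : Fin n → ℝ), (0 : Fin n → ℝ))
      = ((Pi.single j 1 : Fin n → ℝ), (0 : Fin n → ℝ)) ↔ j = i := by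
  constructor
  · intro h
    by_contra hne
    have h1 := congrFun (congrArg Prod.fst h) j
    simp [Pi.single_apply, hne] at h1
  · rintro rfl; rfl

lemma single_eq_iff' (n : ℕ) (i j : Fin n) :
    ((0 : Fin n → ℝ), (Pi.single i 1 : Fin n → ℝ))
      = ((0 : Fin n → ℝ), (Pi.single j 1 : Fin n → ℝ)) ↔ j = i := by
  constructor
  · intro h
    by_contra hne
    have h1 := congrFun (congrArg Prod.snd h) j
    simp [Pi.single_apply, hne] at h1
  · rintro rfl; rfl

lemma cfac_zero_zero (ε : ℝ) (α β : ℕ) :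
    cfac ε 0 0 α β = if α = 0 ∧ β = 0 then 1 else 0 := by
  by_cases h : α = 0 ∧ β = 0
  · obtain ⟨rfl, rfl⟩ := h; simp [cfac]
  · rw [if_neg h, cfac, if_neg (fun hc => h ⟨by omega, by omega⟩)]

lemma cfac_diag (ε : ℝ) (a b : ℕ) :
    cfac ε a b 0 0
      = if a = b then (-1 : ℝ) ^ a * a.factorial * ε ^ (-(a : ℤ)) else 0 := by
  have hfa : ((a.factorial : ℝ)) ≠ 0 := Nat.cast_ne_zero.mpr a.factorial_ne_zero
  by_cases h : a = b
  · subst h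
    rw [if_pos rfl, cfac, if_pos ⟨Nat.zero_le _, Nat.zero_le _, rfl⟩]
    rw [Nat.sub_zero, neg_pow, zpow_neg, zpow_natCast, ← inv_pow]
    rw [mul_right_comm, mul_div_assoc, div_self hfa]
    ring
  · rw [if_neg h, cfac, if_neg (by omega)]

lemma prod_cfac_stepH (n : ℕ) (ε : ℝ) (A B α β : Fin n → ℕ) (i : Fin n) :
    ∏ j, cfac ε (A j + if j = i then 1 else 0) (B j) (α j) (β j)
      = (α i : ℝ) * ∏ j, cfac ε (A j) (B j) (Function.update α i (α i - 1) j) (β j)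
        + (-ε⁻¹) * ∏ j, cfac ε (A j) (B j) (α j) (Function.update β i (β i + 1) j) := by
  have e1 : ∏ j, cfac ε (A j + if j = i then 1 else 0) (B j) (α j) (β j)
      = cfac ε (A i + 1) (B i) (α i) (β i) *
        ∏ j ∈ ({i}ᶜ : Finset (Fin n)), cfac ε (A j) (B j) (α j) (β j) := by
    rw [Fintype.prod_eq_mul_prod_compl i]
    congr 1
    · rw [if_pos rfl]
    · exact Finset.prod_congr rfl fun j hj => by
        have hne : j ≠ i := by simpa using hj
        rw [if_neg hne, add_zero]
  have e2 : ∏ j, cfac ε (A j) (B j) (Function.update α i (α i - 1) j) (β j)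
      = cfac ε (A i) (B i) (α i - 1) (β i) *
        ∏ j ∈ ({i}ᶜ : Finset (Fin n)), cfac ε (A j) (B j) (α j) (β j) := by
    rw [Fintype.prod_eq_mul_prod_compl i]
    congr 1
    · rw [Function.update_self]
    · exact Finset.prod_congr rfl fun j hj => by
        have hne : j ≠ i := by simpa using hj
        rw [Function.update_of_ne hne]
  have e3 : ∏ j, cfac ε (A j) (B j) (α j) (Function.update β i (β i + 1) j)
      = cfac ε (A i) (B i) (α i) (β i + 1) *
        ∏ j ∈ ({i}ᶜ : Finset (Fin n)), cfac ε (A j) (B j) (α j) (β j) := by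
    rw [Fintype.prod_eq_mul_prod_compl i]
    congr 1
    · rw [Function.update_self]
    · exact Finset.prod_congr rfl fun j hj => by
        have hne : j ≠ i := by simpa using hj
        rw [Function.update_of_ne hne]
  rw [e1, e2, e3, cfac_succ_left]
  ring

lemma prod_cfac_stepV (n : ℕ) (ε : ℝ) (A B α β : Fin n → ℕ) (i : Fin n) :
    ∏ j, cfac ε (A j) (B j + if j = i then 1 else 0) (α j) (β j)
      = (β i : ℝ) * ∏ j, cfac ε (A j) (B j) (α j) (Function.update β i (β i - 1) j)
        + (-ε⁻¹) * ∏ j, cfac ε (A j) (B j) (Function.update α i (α i + 1) j) (β j) := by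
  have e1 : ∏ j, cfac ε (A j) (B j + if j = i then 1 else 0) (α j) (β j)
      = cfac ε (A i) (B i + 1) (α i) (β i) *
        ∏ j ∈ ({i}ᶜ : Finset (Fin n)), cfac ε (A j) (B j) (α j) (β j) := by
    rw [Fintype.prod_eq_mul_prod_compl i]
    congr 1
    · rw [if_pos rfl]
    · exact Finset.prod_congr rfl fun j hj => by
        have hne : j ≠ i := by simpa using hj
        rw [if_neg hne, add_zero]
  have e2 : ∏ j, cfac ε (A j) (B j) (α j) (Function.update β i (β i - 1) j)
      = cfac ε (A i) (B i) (α i) (β i - 1) *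
        ∏ j ∈ ({i}ᶜ : Finset (Fin n)), cfac ε (A j) (B j) (α j) (β j) := by
    rw [Fintype.prod_eq_mul_prod_compl i]
    congr 1
    · rw [Function.update_self]
    · exact Finset.prod_congr rfl fun j hj => by
        have hne : j ≠ i := by simpa using hj
        rw [Function.update_of_ne hne]
  have e3 : ∏ j, cfac ε (A j) (B j) (Function.update α i (α i + 1) j) (β j)
      = cfac ε (A i) (B i) (α i + 1) (β i) *
        ∏ j ∈ ({i}ᶜ : Finset (Fin n)), cfac ε (A j) (B j) (α j) (β j) := by
    rw [Fintype.prod_eq_mul_prod_compl i]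
    congr 1
    · rw [Function.update_self]
    · exact Finset.prod_congr rfl fun j hj => by
        have hne : j ≠ i := by simpa using hj
        rw [Function.update_of_ne hne]
  rw [e1, e2, e3, cfac_succ_right]
  ring

lemma key (n : ℕ) (ε : ℝ) :
    ∀ (m : ℕ) (v : Fin m → (Fin n → ℝ) × (Fin n → ℝ)),
    (∀ s, (∃ j, v s = ((Pi.single j 1 : Fin n → ℝ), (0 : Fin n → ℝ))) ∨
          (∃ j, v s = ((0 : Fin n → ℝ), (Pi.single j 1 : Fin n → ℝ)))) →
    ∀ α β : Fin n → ℕ,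
    iteratedFDeriv ℝ m (gfun n ε α β) (0, 0) v =
      ∏ j, cfac ε
        ((univ.filter (fun s => v s = ((Pi.single j 1 : Fin n → ℝ), 0))).card)
        ((univ.filter (fun s => v s = ((0 : Fin n → ℝ), Pi.single j 1))).card)
        (α j) (β j) := by
  intro m
  induction m with
  | zero =>
      intro v hv α β
      rw [iteratedFDeriv_zero_apply]
      simp only [Finset.univ_eq_empty, Finset.filter_empty, Finset.card_empty, cfac_zero_zero]
      rw [show gfun n ε α β (0, 0) = ∏ j : Fin n,
          ((if α j = 0 then (1:ℝ) else 0) * (if β j = 0 then 1 else 0)) from by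
        rw [gfun, Finset.prod_mul_distrib]
        norm_num [zero_pow_eq]]
      exact Finset.prod_congr rfl fun j _ => by
        by_cases h1 : α j = 0 <;> by_cases h2 : β j = 0 <;> simp [h1, h2]
  | succ m IH =>
      intro v hv α β
      have hv' : ∀ s, (∃ j, Fin.init v s = ((Pi.single j 1 : Fin n → ℝ), (0 : Fin n → ℝ))) ∨
          (∃ j, Fin.init v s = ((0 : Fin n → ℝ), (Pi.single j 1 : Fin n → ℝ))) := by
        intro s; exact hv s.castSucc
      rw [iter_rec (contDiff_gfun n ε α β) m (0, 0) v]
      rcases hv (Fin.last m) with ⟨i, hw⟩ | ⟨i, hw⟩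
      · have hfd : (fun y => fderiv ℝ (gfun n ε α β) y (v (Fin.last m)))
            = ((fun y => (α i : ℝ) • gfun n ε (Function.update α i (α i - 1)) β y)
              + (fun y => (-ε⁻¹) • gfun n ε α (Function.update β i (β i + 1)) y)) := by
          funext y; rw [hw]
          simpa [smul_eq_mul] using fderiv_gfun_H n ε α β i y
        rw [hfd, iteratedFDeriv_add_apply
            ((ContDiff.const_smul _ (contDiff_gfun n ε _ _)).of_le le_top).contDiffAt
            ((ContDiff.const_smul _ (contDiff_gfun n ε _ _)).of_le le_top).contDiffAt,
          ContinuousMultilinearMap.add_apply,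
          iteratedFDeriv_const_smul_apply' ((contDiff_gfun n ε _ _).of_le le_top).contDiffAt,
          iteratedFDeriv_const_smul_apply' ((contDiff_gfun n ε _ _).of_le le_top).contDiffAt,
          ContinuousMultilinearMap.smul_apply, ContinuousMultilinearMap.smul_apply,
          IH (Fin.init v) hv', IH (Fin.init v) hv', smul_eq_mul, smul_eq_mul]
        have hA : ∀ j : Fin n,
            (univ.filter (fun s => v s = ((Pi.single j 1 : Fin n → ℝ), 0))).card
            = (univ.filter (fun s : Fin m =>
                Fin.init v s = ((Pi.single j 1 : Fin n → ℝ), 0))).card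
              + (if j = i then 1 else 0) := by
          intro j
          rw [count_snoc]
          congr 1
          rw [hw]
          by_cases h : j = i
          · subst h; simp
          · rw [if_neg (fun hc => h ((single_eq_iff n i j).mp hc)), if_neg h]
        have hB : ∀ j : Fin n,
            (univ.filter (fun s => v s = ((0 : Fin n → ℝ), Pi.single j 1))).card
            = (univ.filter (fun s : Fin m =>
                Fin.init v s = ((0 : Fin n → ℝ), Pi.single j 1))).card := by
          intro j
          rw [count_snoc, hw, if_neg (single_ne n i j), add_zero]
        simp only [hA, hB]
        exact (prod_cfac_stepH n ε _ _ α β i).symm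
      · have hfd : (fun y => fderiv ℝ (gfun n ε α β) y (v (Fin.last m)))
            = ((fun y => (β i : ℝ) • gfun n ε α (Function.update β i (β i - 1)) y)
              + (fun y => (-ε⁻¹) • gfun n ε (Function.update α i (α i + 1)) β y)) := by
          funext y; rw [hw]
          simpa [smul_eq_mul] using fderiv_gfun_V n ε α β i y
        rw [hfd, iteratedFDeriv_add_apply
            ((ContDiff.const_smul _ (contDiff_gfun n ε _ _)).of_le le_top).contDiffAt
            ((ContDiff.const_smul _ (contDiff_gfun n ε _ _)).of_le le_top).contDiffAt,
          ContinuousMultilinearMap.add_apply,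
          iteratedFDeriv_const_smul_apply' ((contDiff_gfun n ε _ _).of_le le_top).contDiffAt,
          iteratedFDeriv_const_smul_apply' ((contDiff_gfun n ε _ _).of_le le_top).contDiffAt,
          ContinuousMultilinearMap.smul_apply, ContinuousMultilinearMap.smul_apply,
          IH (Fin.init v) hv', IH (Fin.init v) hv', smul_eq_mul, smul_eq_mul]
        have hA : ∀ j : Fin n,
            (univ.filter (fun s => v s = ((Pi.single j 1 : Fin n → ℝ), 0))).card
            = (univ.filter (fun s : Fin m =>
                Fin.init v s = ((Pi.single j 1 : Fin n → ℝ), 0))).card := by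
          intro j
          rw [count_snoc, hw, if_neg (Ne.symm (single_ne n j i)), add_zero]
        have hB : ∀ j : Fin n,
            (univ.filter (fun s => v s = ((0 : Fin n → ℝ), Pi.single j 1))).card
            = (univ.filter (fun s : Fin m =>
                Fin.init v s = ((0 : Fin n → ℝ), Pi.single j 1))).card
              + (if j = i then 1 else 0) := by
          intro j
          rw [count_snoc]
          congr 1
          rw [hw]
          by_cases h : j = i
          · subst h; simp
          · rw [if_neg (fun hc => h ((single_eq_iff' n i j).mp hc)), if_neg h]
        simp only [hA, hB]
        exact (prod_cfac_stepV n ε _ _ α β i).symm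

end GPAux

/-- The contraction `⟨∂_x^α ∂_ξ^β exp(εΔ)⟩` for all multi-indices `α, β`: the
`m`-th iterated Fréchet derivative of `F(x,ξ) = exp(−(Σ_i x_i ξ_i)/ε)` at the
origin, evaluated on a list of standard basis vectors with `a_j` horizontal
vectors `(e_j, 0)` and `b_j` vertical vectors `(0, e_j)`, vanishes unless
`a_j = b_j` for all `j`, in which case it equals `∏_j (−1)^{a_j} a_j! ε^{−a_j}`. -/
theorem iteratedFDeriv_gaussian_pairing
    (n : ℕ) (hn : 1 ≤ n) (ε : ℝ) (hε : ε ≠ 0) (m : ℕ)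
    (v : Fin m → (Fin n → ℝ) × (Fin n → ℝ))
    (hv : ∀ s, (∃ j, v s = ((Pi.single j 1 : Fin n → ℝ), (0 : Fin n → ℝ))) ∨
               (∃ j, v s = ((0 : Fin n → ℝ), (Pi.single j 1 : Fin n → ℝ))))
    (a b : Fin n → ℕ)
    (ha : ∀ j, a j = (Finset.univ.filter
      (fun s : Fin m => v s = ((Pi.single j 1 : Fin n → ℝ), (0 : Fin n → ℝ)))).card)
    (hb : ∀ j, b j = (Finset.univ.filter
      (fun s : Fin m => v s = ((0 : Fin n → ℝ), (Pi.single j 1 : Fin n → ℝ)))).card) :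
    iteratedFDeriv ℝ m
        (fun p : (Fin n → ℝ) × (Fin n → ℝ) => Real.exp (-(∑ i, p.1 i * p.2 i) / ε))
        (0, 0) v
      = if ∀ j, a j = b j then
          ∏ j, (-1 : ℝ) ^ (a j) * ((a j).factorial : ℝ) * ε ^ (-(a j : ℤ))
        else 0 := by
  have hfg : (fun p : (Fin n → ℝ) × (Fin n → ℝ) =>
      Real.exp (-(∑ i, p.1 i * p.2 i) / ε)) = GPAux.gfun n ε 0 0 := by
    funext p; simp [GPAux.gfun]
  rw [hfg, GPAux.key n ε m v hv 0 0]
  have hc : ∀ j : Fin n,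
      GPAux.cfac ε
        ((univ.filter (fun s => v s = ((Pi.single j 1 : Fin n → ℝ), 0))).card)
        ((univ.filter (fun s => v s = ((0 : Fin n → ℝ), Pi.single j 1))).card)
        ((0 : Fin n → ℕ) j) ((0 : Fin n → ℕ) j)
      = if a j = b j then (-1 : ℝ) ^ (a j) * ((a j).factorial : ℝ) * ε ^ (-(a j : ℤ))
        else 0 := by
    intro j
    rw [show ((0 : Fin n → ℕ) j) = 0 from rfl, ← ha j, ← hb j, GPAux.cfac_diag]
  rw [Finset.prod_congr rfl fun j _ => hc j]
  by_cases hab : ∀ j, a j = b j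
  · rw [if_pos hab]
    exact Finset.prod_congr rfl fun j _ => if_pos (hab j)
  · rw [if_neg hab]
    push_neg at hab
    obtain ⟨j, hj⟩ := hab
    exact Finset.prod_eq_zero (mem_univ j) (if_neg hj)
end

section
/- Let g : ℝ^n ∖ {0} → ℝ be smooth and positively homogeneous of degree 1 − n, i.e. g(tξ) = t^{1−n} g(ξ) for all t > 0 and ξ ≠ 0. Then for every j ∈ {1,…,n}, the integral over the unit sphere S^{n−1} = {ξ ∈ ℝ^n : ‖ξ‖ = 1} of the partial derivative ∂g/∂ξ_j (with respect to the (n−1)-dimensional Hausdorff measure on S^{n−1}) vanishes: ∫_{S^{n−1}} (∂g/∂ξ_j)(ω) dσ(ω) = 0. (This Stokes-type identity is the key step in proving the trace property of Perrot's trace: the residue-type integral of the ξ-derivative of a homogeneous function of degree 1 − n is zero.) -/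
open MeasureTheory Metric Set
open scoped NNReal ENNReal

lemma abs_coord_le (n : ℕ) (x : EuclideanSpace ℝ (Fin n)) (i : Fin n) : |x i| ≤ ‖x‖ := by
  have h1 : |x i| = Real.sqrt ((x i)^2) := by rw [Real.sqrt_sq_eq_abs]
  rw [h1, EuclideanSpace.norm_eq x]
  apply Real.sqrt_le_sqrt
  simpa using Finset.single_le_sum (f := fun i => x i ^ 2) (fun i _ => sq_nonneg _) (Finset.mem_univ i)

-- Lipschitz of normalization on {1 ≤ ‖x‖}
lemma lipschitz_normalize (n : ℕ) :
    LipschitzOnWith 2 (fun x : EuclideanSpace ℝ (Fin n) => ‖x‖⁻¹ • x)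
      {x | 1 ≤ ‖x‖} := by
  rw [lipschitzOnWith_iff_dist_le_mul]
  intro x hx y hy
  simp only [mem_setOf_eq] at hx hy
  have hx0 : (0:ℝ) < ‖x‖ := lt_of_lt_of_le one_pos hx
  have hy0 : (0:ℝ) < ‖y‖ := lt_of_lt_of_le one_pos hy
  have key : dist (‖x‖⁻¹ • x) (‖y‖⁻¹ • y) ≤ ‖x‖⁻¹ * dist x y + |‖x‖⁻¹ - ‖y‖⁻¹| * ‖y‖ := by
    calc dist (‖x‖⁻¹ • x) (‖y‖⁻¹ • y)
        ≤ dist (‖x‖⁻¹ • x) (‖x‖⁻¹ • y) + dist (‖x‖⁻¹ • y) (‖y‖⁻¹ • y) := dist_triangle _ _ _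
      _ = ‖x‖⁻¹ * dist x y + |‖x‖⁻¹ - ‖y‖⁻¹| * ‖y‖ := by
          rw [dist_smul₀, dist_eq_norm (‖x‖⁻¹ • y), ← sub_smul, norm_smul]
          simp [Real.norm_eq_abs, abs_of_pos hx0, dist_eq_norm]
  have h2 : |‖x‖⁻¹ - ‖y‖⁻¹| * ‖y‖ ≤ dist x y := by
    have : |‖x‖⁻¹ - ‖y‖⁻¹| = |‖y‖ - ‖x‖| / (‖x‖ * ‖y‖) := by
      rw [inv_sub_inv hx0.ne' hy0.ne', abs_div]
      congr 1
      exact abs_of_pos (by positivity)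
    rw [this, div_mul_eq_mul_div, mul_comm (‖x‖) (‖y‖), ← div_div, mul_div_assoc,
      div_self hy0.ne', mul_one]
    have h3 : |‖y‖ - ‖x‖| ≤ dist x y := by
      rw [abs_sub_comm, dist_eq_norm]; exact abs_norm_sub_norm_le x y
    calc |‖y‖ - ‖x‖| / ‖x‖ ≤ |‖y‖ - ‖x‖| / 1 := by
          apply div_le_div_of_nonneg_left (abs_nonneg _) one_pos hx
      _ = |‖y‖ - ‖x‖| := div_one _
      _ ≤ dist x y := h3
  have h1 : ‖x‖⁻¹ * dist x y ≤ dist x y := by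
    have : ‖x‖⁻¹ ≤ 1 := by rw [inv_le_one_iff₀]; right; exact hx
    nlinarith [dist_nonneg (x := x) (y := y)]
  push_cast
  linarith

section caps
variable (m : ℕ)

local notation "E" => EuclideanSpace ℝ (Fin (m+1))

/-- embedding of hyperplane-coordinates -/
noncomputable def capMap (k : Fin (m+1)) (ε : ℝ) (y : Fin m → ℝ) : E :=
  ε • EuclideanSpace.single k 1 + ∑ l : Fin m, y l • EuclideanSpace.single (k.succAbove l) 1

lemma capMap_lipschitz (k : Fin (m+1)) (ε : ℝ) :
    LipschitzWith m (capMap m k ε) := by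
  apply LipschitzWith.of_dist_le_mul
  intro y y'
  have : capMap m k ε y - capMap m k ε y'
      = ∑ l : Fin m, (y l - y' l) • EuclideanSpace.single (k.succAbove l) 1 := by
    simp only [capMap, sub_smul, Finset.sum_sub_distrib]
    abel
  rw [dist_eq_norm, this]
  calc ‖∑ l : Fin m, (y l - y' l) • EuclideanSpace.single (k.succAbove l) (1:ℝ)‖
      ≤ ∑ l : Fin m, ‖(y l - y' l) • EuclideanSpace.single (k.succAbove l) (1:ℝ)‖ :=
        norm_sum_le _ _
    _ ≤ ∑ l : Fin m, dist y y' := by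
        apply Finset.sum_le_sum
        intro l _
        rw [norm_smul, EuclideanSpace.norm_single, norm_one, mul_one, Real.norm_eq_abs,
          ← Real.dist_eq]
        exact dist_le_pi_dist y y' l
    _ = m * dist y y' := by simp [mul_comm]

lemma capMap_apply_self (k : Fin (m+1)) (ε : ℝ) (y : Fin m → ℝ) :
    capMap m k ε y k = ε := by
  simp only [capMap]
  rw [PiLp.add_apply, PiLp.smul_apply, EuclideanSpace.single_apply]
  rw [show ((∑ l : Fin m, y l • EuclideanSpace.single (k.succAbove l) (1:ℝ)) : E) k
      = ∑ l : Fin m, (y l • (EuclideanSpace.single (k.succAbove l) (1:ℝ) : E)) k from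
    by rw [WithLp.ofLp_sum, Finset.sum_apply]]
  simp only [PiLp.smul_apply, EuclideanSpace.single_apply]
  rw [Finset.sum_eq_zero]
  · simp
  intro l _
  rw [if_neg (Ne.symm (Fin.succAbove_ne k l))]
  simp

lemma capMap_apply_other (k : Fin (m+1)) (ε : ℝ) (y : Fin m → ℝ) (l : Fin m) :
    capMap m k ε y (k.succAbove l) = y l := by
  simp only [capMap]
  rw [PiLp.add_apply, PiLp.smul_apply, EuclideanSpace.single_apply,
    if_neg (Fin.succAbove_ne k l)]
  rw [show ((∑ l' : Fin m, y l' • EuclideanSpace.single (k.succAbove l') (1:ℝ)) : E) (k.succAbove l)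
      = ∑ l' : Fin m, (y l' • (EuclideanSpace.single (k.succAbove l') (1:ℝ) : E)) (k.succAbove l) from
    by rw [WithLp.ofLp_sum, Finset.sum_apply]]
  simp only [PiLp.smul_apply, EuclideanSpace.single_apply]
  rw [Finset.sum_eq_single l]
  · simp
  · intro l' _ hl'
    rw [if_neg (fun h => hl' (Fin.succAbove_right_injective h.symm))]
    simp
  · simp

end caps

lemma sphere_hausdorff_lt_top (m : ℕ) :
    μH[(m:ℝ)] (Metric.sphere (0 : EuclideanSpace ℝ (Fin (m+1))) 1) < ⊤ := by
  classical
  set R : ℝ := Real.sqrt (m+1) with hRdef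
  have hR1 : 1 ≤ R := by
    have h := Real.sqrt_le_sqrt (show (1:ℝ) ≤ (m:ℝ)+1 by push_cast; linarith)
    simpa [hRdef] using h
  have hR0 : 0 ≤ R := le_trans zero_le_one hR1
  set φ : EuclideanSpace ℝ (Fin (m+1)) → EuclideanSpace ℝ (Fin (m+1)) :=
    fun x => ‖x‖⁻¹ • x with hφ
  set B : Set (Fin m → ℝ) := Metric.closedBall 0 R with hB
  set C : Fin (m+1) × Bool → Set (EuclideanSpace ℝ (Fin (m+1))) :=
    fun p => φ '' (capMap m p.1 (cond p.2 1 (-1)) '' B) with hC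
  have cover : Metric.sphere (0 : EuclideanSpace ℝ (Fin (m+1))) 1 ⊆ ⋃ p, C p := by
    intro ω hω
    have hω1 : ‖ω‖ = 1 := by simpa using hω
    have hsum : ∑ i, (ω i)^2 = 1 := by
      have h0 := EuclideanSpace.norm_eq ω
      rw [hω1] at h0
      have h2 : Real.sqrt (∑ i, ω i ^ 2) = 1 := by
        rw [← h0.symm]
        congr 1
        exact Finset.sum_congr rfl (fun i _ => by rw [Real.norm_eq_abs, sq_abs])
      nlinarith [Real.sq_sqrt (Finset.sum_nonneg (fun i (_ : i ∈ Finset.univ) => sq_nonneg (ω i))),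
        h2]
    have hex : ∃ k, 1/(m+1:ℝ) ≤ (ω k)^2 := by
      by_contra hcon
      push_neg at hcon
      have hlt : ∑ i, (ω i)^2 < ∑ _i : Fin (m+1), 1/(m+1:ℝ) :=
        Finset.sum_lt_sum_of_nonempty (by simp) (fun i _ => hcon i)
      rw [hsum] at hlt
      simp only [Finset.sum_const, Finset.card_univ, Fintype.card_fin, nsmul_eq_mul] at hlt
      rw [mul_one_div] at hlt
      push_cast at hlt
      rw [div_self (by positivity)] at hlt
      exact lt_irrefl _ hlt
    obtain ⟨k, hk⟩ := hex
    set a := ω k with ha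
    have ha0 : a ≠ 0 := by
      intro h; rw [h] at hk; simp at hk; nlinarith [hk]
    set b : Bool := decide (0 ≤ a) with hb
    set ε : ℝ := cond b 1 (-1) with hε
    have hεa : ε * a = |a| := by
      by_cases h : 0 ≤ a
      · have hbt : b = true := by simp [hb, h]
        rw [hε, hbt, abs_of_nonneg h]; simp
      · have hbf : b = false := by simp [hb, h]
        rw [hε, hbf, abs_of_neg (lt_of_not_ge h)]; simp
    have habs : 1/R ≤ |a| := by
      have h1 : (1/R)^2 = 1/(m+1:ℝ) := by
        rw [div_pow, one_pow, hRdef, Real.sq_sqrt (by positivity)]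
      have h2 : (1/R)^2 ≤ a^2 := by rw [h1]; exact hk
      have h3 := Real.sqrt_le_sqrt h2
      rwa [Real.sqrt_sq (by positivity), Real.sqrt_sq_eq_abs] at h3
    set t : ℝ := 1 / |a| with ht
    have htpos : 0 < t := by rw [ht]; positivity
    have hta : t * a = ε := by
      by_cases h : 0 ≤ a
      · have hbt : b = true := by simp [hb, h]
        rw [hε, hbt, ht, abs_of_nonneg h, one_div, inv_mul_cancel₀ ha0]
        simp
      · have hbf : b = false := by simp [hb, h]
        rw [hε, hbf, ht, abs_of_neg (lt_of_not_ge h), div_neg, one_div, neg_mul,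
          inv_mul_cancel₀ ha0]
        simp
    have htR : t ≤ R := by
      rw [ht, div_le_iff₀ (by positivity)]
      calc (1:ℝ) = R * (1/R) := by field_simp
        _ ≤ R * |a| := by
            apply mul_le_mul_of_nonneg_left habs (by linarith)
    set x : EuclideanSpace ℝ (Fin (m+1)) := t • ω with hx
    have hxnorm : ‖x‖ = t := by
      rw [hx, norm_smul, hω1, mul_one, Real.norm_eq_abs, abs_of_pos htpos]
    have hxk : x k = ε := by
      rw [hx]; show t * ω k = ε; rw [← ha]; exact hta
    set y : Fin m → ℝ := fun l => x (k.succAbove l) with hy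
    have hyB : y ∈ B := by
      rw [hB, Metric.mem_closedBall, dist_pi_le_iff hR0]
      intro l
      rw [Real.dist_eq]
      simp only [Pi.zero_apply, sub_zero]
      calc |y l| ≤ ‖x‖ := abs_coord_le (m+1) x (k.succAbove l)
        _ = t := hxnorm
        _ ≤ R := htR
    have hcap : capMap m k ε y = x := by
      refine PiLp.ext fun i => ?_
      rcases eq_or_ne i k with h | hik
      · subst h
        rw [show capMap m i ε y i = ε from capMap_apply_self m i ε y]
        exact hxk.symm
      · obtain ⟨l, rfl⟩ := Fin.exists_succAbove_eq hik
        exact capMap_apply_other m k ε y l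
    have hφx : φ x = ω := by
      rw [hφ]
      show ‖x‖⁻¹ • x = ω
      rw [hxnorm, hx, smul_smul, inv_mul_cancel₀ htpos.ne', one_smul]
    refine Set.mem_iUnion.2 ⟨(k, b), ?_⟩
    rw [hC]
    exact ⟨x, ⟨y, hyB, hcap⟩, hφx⟩
  -- measure estimate
  have hcapfin : ∀ p : Fin (m+1) × Bool, μH[(m:ℝ)] (C p) < ⊤ := by
    rintro ⟨k1, b1⟩
    have hm0 : (0:ℝ) ≤ (m:ℝ) := Nat.cast_nonneg m
    have hsub : capMap m k1 (cond b1 1 (-1)) '' B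
        ⊆ {x : EuclideanSpace ℝ (Fin (m+1)) | 1 ≤ ‖x‖} := by
      rintro _ ⟨y, _, rfl⟩
      have h1 : |capMap m k1 (cond b1 1 (-1)) y k1| = 1 := by
        rw [capMap_apply_self]
        cases b1 <;> norm_num
      calc (1:ℝ) = |capMap m k1 (cond b1 1 (-1)) y k1| := h1.symm
        _ ≤ ‖capMap m k1 (cond b1 1 (-1)) y‖ := abs_coord_le _ _ _
    have h1 : μH[(m:ℝ)] (C (k1, b1))
        ≤ ((2:ℝ≥0):ℝ≥0∞)^(m:ℝ) * μH[(m:ℝ)] (capMap m k1 (cond b1 1 (-1)) '' B) := by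
      rw [hC]
      exact ((lipschitz_normalize (m+1)).mono hsub).hausdorffMeasure_image_le hm0
    have h2 : μH[(m:ℝ)] (capMap m k1 (cond b1 1 (-1)) '' B)
        ≤ ((m:ℝ≥0):ℝ≥0∞)^(m:ℝ) * μH[(m:ℝ)] B :=
      (capMap_lipschitz m k1 (cond b1 1 (-1))).hausdorffMeasure_image_le hm0 B
    have hBvol : μH[(m:ℝ)] B = volume B := by
      have h := hausdorffMeasure_pi_real (ι := Fin m)
      simp only [Fintype.card_fin] at h
      rw [h]
    have hBfin : μH[(m:ℝ)] B < ⊤ := by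
      rw [hBvol, hB]
      exact (isCompact_closedBall 0 R).measure_lt_top
    calc μH[(m:ℝ)] (C (k1, b1))
        ≤ ((2:ℝ≥0):ℝ≥0∞)^(m:ℝ) * (((m:ℝ≥0):ℝ≥0∞)^(m:ℝ) * μH[(m:ℝ)] B) :=
          le_trans h1 (mul_le_mul_right h2 _)
      _ < ⊤ := by
          apply ENNReal.mul_lt_top
          · exact ENNReal.rpow_lt_top_of_nonneg hm0 (by simp)
          apply ENNReal.mul_lt_top
          · exact ENNReal.rpow_lt_top_of_nonneg hm0 (by simp)
          · exact hBfin
  calc μH[(m:ℝ)] (Metric.sphere (0 : EuclideanSpace ℝ (Fin (m+1))) 1)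
      ≤ μH[(m:ℝ)] (⋃ p, C p) := measure_mono cover
    _ ≤ ∑' p, μH[(m:ℝ)] (C p) := measure_iUnion_le C
    _ < ⊤ := by
        rw [tsum_fintype]
        exact ENNReal.sum_lt_top.2 (fun p _ => hcapfin p)

noncomputable section RotSec
variable {n : ℕ} (j k : Fin n)

local notation "E" => EuclideanSpace ℝ (Fin n)

/-- rotation by angle θ in the (j,k) coordinate plane -/
def rotMap (θ : ℝ) (x : E) : E :=
  WithLp.toLp 2 (fun i => if i = j then Real.cos θ * x j + Real.sin θ * x k
    else if i = k then -Real.sin θ * x j + Real.cos θ * x k else x i)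

variable (hjk : j ≠ k)

lemma rotMap_sub (θ : ℝ) (x y : E) :
    rotMap j k θ x - rotMap j k θ y = rotMap j k θ (x - y) := by
  refine PiLp.ext fun i => ?_
  show rotMap j k θ x i - rotMap j k θ y i = _
  simp only [rotMap, PiLp.sub_apply, PiLp.toLp_apply]
  split_ifs <;> ring

include hjk in
lemma rotMap_norm (θ : ℝ) (x : E) : ‖rotMap j k θ x‖ = ‖x‖ := by
  rw [EuclideanSpace.norm_eq, EuclideanSpace.norm_eq]
  congr 1
  have h1 : ∀ z : E, ∑ i, ‖z i‖^2 = ‖z j‖^2 + (‖z k‖^2 + ∑ i ∈ (Finset.univ.erase j).erase k, ‖z i‖^2) := by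
    intro z
    rw [← Finset.add_sum_erase _ _ (Finset.mem_univ j),
      ← Finset.add_sum_erase _ _ (Finset.mem_erase.2 ⟨Ne.symm hjk, Finset.mem_univ k⟩)]
  rw [h1, h1]
  have h2 : ∀ i, i ∈ (Finset.univ.erase j).erase k → ‖rotMap j k θ x i‖^2 = ‖x i‖^2 := by
    intro i hi
    rw [Finset.mem_erase, Finset.mem_erase] at hi
    simp only [rotMap, PiLp.toLp_apply, if_neg hi.2.1, if_neg hi.1]
  rw [Finset.sum_congr rfl h2]
  have hj' : rotMap j k θ x j = Real.cos θ * x j + Real.sin θ * x k := by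
    simp [rotMap]
  have hk' : rotMap j k θ x k = -Real.sin θ * x j + Real.cos θ * x k := by
    simp [rotMap, Ne.symm hjk]
  rw [hj', hk']
  simp only [Real.norm_eq_abs, sq_abs]
  nlinarith [Real.sin_sq_add_cos_sq θ]

include hjk in
lemma rotMap_rotMap (θ : ℝ) (x : E) : rotMap j k (-θ) (rotMap j k θ x) = x := by
  refine PiLp.ext fun i => ?_
  show rotMap j k (-θ) (rotMap j k θ x) i = x i
  rcases eq_or_ne i j with rfl | hij
  · simp only [rotMap, PiLp.toLp_apply]
    simp [Ne.symm hjk]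
    linear_combination (x i) * Real.sin_sq_add_cos_sq θ
  · rcases eq_or_ne i k with rfl | hik
    · simp [rotMap, Ne.symm hjk, hij]
      linear_combination (x i) * Real.sin_sq_add_cos_sq θ
    · simp [rotMap, hij, hik]

include hjk in
lemma rotMap_isometry (θ : ℝ) : Isometry (rotMap j k θ) := by
  intro x y
  rw [edist_dist, edist_dist, dist_eq_norm, dist_eq_norm, rotMap_sub,
    rotMap_norm j k hjk]

/-- rotation as an isometry equivalence -/
def rotEquiv (θ : ℝ) : EuclideanSpace ℝ (Fin n) ≃ᵢ EuclideanSpace ℝ (Fin n) where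
  toFun := rotMap j k θ
  invFun := rotMap j k (-θ)
  left_inv := rotMap_rotMap j k hjk θ
  right_inv := fun x => by
    have := rotMap_rotMap j k hjk (-θ) x
    rwa [neg_neg] at this
  isometry_toFun := rotMap_isometry j k hjk θ

include hjk in
lemma rotMap_preimage_sphere (θ : ℝ) :
    rotMap j k θ ⁻¹' (sphere (0:E) 1) = sphere (0:E) 1 := by
  ext x
  simp only [mem_preimage, mem_sphere_iff_norm, sub_zero, rotMap_norm j k hjk]

end RotSec

noncomputable section RotSec2
variable {n : ℕ} (j k : Fin n) (hjk : j ≠ k)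

local notation "E" => EuclideanSpace ℝ (Fin n)

lemma abs_coord_le' (x : E) (i : Fin n) : |x i| ≤ ‖x‖ := by
  have h1 : |x i| = Real.sqrt ((x i)^2) := by rw [Real.sqrt_sq_eq_abs]
  rw [h1, EuclideanSpace.norm_eq x]
  apply Real.sqrt_le_sqrt
  simpa using Finset.single_le_sum (f := fun i => x i ^ 2) (fun i _ => sq_nonneg _) (Finset.mem_univ i)

def pvec (ω : E) : E := ω j • EuclideanSpace.single j 1 + ω k • EuclideanSpace.single k 1
def qvec (ω : E) : E := ω k • EuclideanSpace.single j 1 - ω j • EuclideanSpace.single k 1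

lemma pvec_norm_le (ω : E) : ‖pvec j k ω‖ ≤ 2 * ‖ω‖ := by
  calc ‖pvec j k ω‖ ≤ ‖ω j • EuclideanSpace.single j (1:ℝ)‖ + ‖ω k • EuclideanSpace.single k (1:ℝ)‖ :=
        norm_add_le _ _
    _ ≤ 2 * ‖ω‖ := by
        rw [norm_smul, norm_smul, EuclideanSpace.norm_single, EuclideanSpace.norm_single]
        simp only [norm_one, mul_one, Real.norm_eq_abs]
        have := abs_coord_le' ω j; have := abs_coord_le' ω k
        linarith

lemma qvec_norm_le (ω : E) : ‖qvec j k ω‖ ≤ 2 * ‖ω‖ := by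
  calc ‖qvec j k ω‖ ≤ ‖ω k • EuclideanSpace.single j (1:ℝ)‖ + ‖ω j • EuclideanSpace.single k (1:ℝ)‖ :=
        norm_sub_le _ _
    _ ≤ 2 * ‖ω‖ := by
        rw [norm_smul, norm_smul, EuclideanSpace.norm_single, EuclideanSpace.norm_single]
        simp only [norm_one, mul_one, Real.norm_eq_abs]
        have := abs_coord_le' ω j; have := abs_coord_le' ω k
        linarith

include hjk in
lemma rotMap_eq_curve (θ : ℝ) (ω : E) :
    rotMap j k θ ω = ω + (Real.cos θ - 1) • pvec j k ω + Real.sin θ • qvec j k ω := by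
  refine PiLp.ext fun i => ?_
  show rotMap j k θ ω i = (ω + (Real.cos θ - 1) • pvec j k ω + Real.sin θ • qvec j k ω) i
  have expand : (ω + (Real.cos θ - 1) • pvec j k ω + Real.sin θ • qvec j k ω) i
      = ω i + (Real.cos θ - 1) * (pvec j k ω i) + Real.sin θ * (qvec j k ω i) := rfl
  have hp : pvec j k ω i = ω j * (if i = j then 1 else 0) + ω k * (if i = k then 1 else 0) := by
    show ω j * EuclideanSpace.single j (1:ℝ) i + ω k * EuclideanSpace.single k (1:ℝ) i = _
    rw [EuclideanSpace.single_apply, EuclideanSpace.single_apply]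
  have hq : qvec j k ω i = ω k * (if i = j then 1 else 0) - ω j * (if i = k then 1 else 0) := by
    show ω k * EuclideanSpace.single j (1:ℝ) i - ω j * EuclideanSpace.single k (1:ℝ) i = _
    rw [EuclideanSpace.single_apply, EuclideanSpace.single_apply]
  rw [expand, hp, hq]
  simp only [rotMap, PiLp.toLp_apply]
  rcases eq_or_ne i j with rfl | hij
  · rw [if_pos rfl, if_pos rfl, if_neg hjk]; ring
  · rw [if_neg hij]
    rcases eq_or_ne i k with rfl | hik
    · rw [if_pos rfl, if_pos rfl, if_neg (by exact hij)]; ring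
    · rw [if_neg hik, if_neg hik, if_neg hij]; ring

include hjk in
lemma hasDerivAt_rotMap (ω : E) (θ : ℝ) :
    HasDerivAt (fun θ => rotMap j k θ ω)
      ((-Real.sin θ) • pvec j k ω + Real.cos θ • qvec j k ω) θ := by
  have heq : (fun θ => rotMap j k θ ω)
      = fun θ => ω + (Real.cos θ - 1) • pvec j k ω + Real.sin θ • qvec j k ω :=
    funext fun θ => rotMap_eq_curve j k hjk θ ω
  rw [heq]
  have h1 : HasDerivAt (fun θ : ℝ => (Real.cos θ - 1) • pvec j k ω)
      ((-Real.sin θ) • pvec j k ω) θ :=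
    ((Real.hasDerivAt_cos θ).sub_const 1).smul_const _
  have h2 : HasDerivAt (fun θ : ℝ => Real.sin θ • qvec j k ω)
      (Real.cos θ • qvec j k ω) θ := (Real.hasDerivAt_sin θ).smul_const _
  exact (h1.const_add ω).add h2

include hjk in
lemma integral_rot_invariant (d : ℝ) (θ : ℝ) (G : E → ℝ) :
    ∫ ω in sphere (0:E) 1, G (rotMap j k θ ω) ∂(μH[d])
      = ∫ ω in sphere (0:E) 1, G ω ∂(μH[d]) := by
  have hmp : MeasurePreserving (rotEquiv j k hjk θ) μH[d] μH[d] :=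
    (rotEquiv j k hjk θ).measurePreserving_hausdorffMeasure d
  have hemb : MeasurableEmbedding (rotEquiv j k hjk θ) :=
    (rotEquiv j k hjk θ).toHomeomorph.measurableEmbedding
  have h := hmp.setIntegral_preimage_emb hemb G (sphere (0:E) 1)
  rw [show (rotEquiv j k hjk θ) ⁻¹' (sphere (0:E) 1) = sphere (0:E) 1 from
    rotMap_preimage_sphere j k hjk θ] at h
  exact h

end RotSec2

noncomputable section KeySec
variable {n : ℕ}

local notation "E" => EuclideanSpace ℝ (Fin n)

lemma integral_fderiv_qvec (j k : Fin n) (hjk : j ≠ k) (d : ℝ)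
    (hfin : μH[d] (sphere (0:E) 1) < ⊤)
    (G : E → ℝ) (hG : ContDiffOn ℝ (⊤ : ℕ∞) G {(0:E)}ᶜ) :
    ∫ ω in sphere (0:E) 1, fderiv ℝ G ω (qvec j k ω) ∂(μH[d]) = 0 := by
  have hopen : IsOpen ({(0:E)}ᶜ) := isOpen_compl_singleton
  have hSsub : sphere (0:E) 1 ⊆ {(0:E)}ᶜ := by
    intro x hx
    simp only [mem_compl_iff, mem_singleton_iff]
    intro h
    rw [h] at hx
    simp at hx
  have hSmeas : MeasurableSet (sphere (0:E) 1) := (isClosed_sphere).measurableSet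
  set μ : Measure E := (μH[d]).restrict (sphere (0:E) 1) with hμ
  haveI : IsFiniteMeasure μ := ⟨by rw [hμ, Measure.restrict_apply_univ]; exact hfin⟩
  -- differentiability of G off 0
  have hGdiff : ∀ x : E, x ≠ 0 → HasFDerivAt G (fderiv ℝ G x) x := by
    intro x hx
    have hat : ContDiffAt ℝ (⊤:ℕ∞) G x := hG.contDiffAt (hopen.mem_nhds hx)
    exact (hat.differentiableAt (by simp)).hasFDerivAt
  have hfd : ContinuousOn (fun x => fderiv ℝ G x) ({(0:E)}ᶜ) :=
    hG.continuousOn_fderiv_of_isOpen hopen (by exact_mod_cast le_top)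
  -- global bound on the sphere for ‖fderiv G‖
  obtain ⟨M, hM⟩ := (isCompact_sphere (0:E) 1).exists_bound_of_continuousOn
    (hfd.mono hSsub)
  -- continuity of pvec, qvec
  have hcont_coord : ∀ i : Fin n, Continuous (fun ω : E => ω i) := by
    intro i
    exact (EuclideanSpace.proj i).continuous
  have hqcont : Continuous (qvec j k (n := n)) := by
    unfold qvec
    exact ((hcont_coord k).smul continuous_const).sub ((hcont_coord j).smul continuous_const)
  have hpcont : Continuous (pvec j k (n := n)) := by
    unfold pvec
    exact ((hcont_coord j).smul continuous_const).add ((hcont_coord k).smul continuous_const)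
  -- the family
  set F : ℝ → E → ℝ := fun θ ω => G (rotMap j k θ ω) with hF
  set F' : ℝ → E → ℝ := fun θ ω =>
    (fderiv ℝ G (rotMap j k θ ω)) ((-Real.sin θ) • pvec j k ω + Real.cos θ • qvec j k ω) with hF'
  have hrotcont : ∀ θ, Continuous (rotMap j k θ) := fun θ => (rotMap_isometry j k hjk θ).continuous
  have hrot_sphere : ∀ θ, ∀ ω ∈ sphere (0:E) 1, rotMap j k θ ω ∈ sphere (0:E) 1 := by
    intro θ ω hω
    rw [mem_sphere_iff_norm, sub_zero] at hω ⊢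
    rw [rotMap_norm j k hjk, hω]
  have hFcont : ∀ θ, ContinuousOn (F θ) (sphere (0:E) 1) := by
    intro θ
    exact hG.continuousOn.comp ((hrotcont θ).continuousOn)
      (fun ω hω => hSsub (hrot_sphere θ ω hω))
  have hFmeas : ∀ θ, AEStronglyMeasurable (F θ) μ := by
    intro θ
    exact (hFcont θ).aestronglyMeasurable hSmeas
  have hF'cont : ContinuousOn (F' 0) (sphere (0:E) 1) := by
    have h1 : ContinuousOn (fun ω => fderiv ℝ G (rotMap j k 0 ω)) (sphere (0:E) 1) :=
      hfd.comp ((hrotcont 0).continuousOn) (fun ω hω => hSsub (hrot_sphere 0 ω hω))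
    have h2 : ContinuousOn
        (fun ω : E => (-Real.sin 0) • pvec j k ω + Real.cos 0 • qvec j k ω)
        (sphere (0:E) 1) :=
      (by fun_prop : Continuous fun ω : E => (-Real.sin 0) • pvec j k ω + Real.cos 0 • qvec j k ω).continuousOn
    exact h1.clm_apply h2
  have hF'meas : AEStronglyMeasurable (F' 0) μ :=
    hF'cont.aestronglyMeasurable hSmeas
  -- integrability of F 0
  obtain ⟨C, hC⟩ := (isCompact_sphere (0:E) 1).exists_bound_of_continuousOn (hFcont 0)
  have hFint : Integrable (F 0) μ := by
    refine Integrable.mono' (integrable_const C) (hFmeas 0) ?_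
    rw [hμ, ae_restrict_iff' hSmeas]
    exact Filter.Eventually.of_forall (fun ω hω => hC ω hω)
  -- bound for F'
  have h_bound : ∀ᵐ ω ∂μ, ∀ θ ∈ Metric.ball (0:ℝ) 1, ‖F' θ ω‖ ≤ 4 * |M| := by
    rw [hμ, ae_restrict_iff' hSmeas]
    refine Filter.Eventually.of_forall (fun ω hω => ?_)
    intro θ _
    have hω1 : ‖ω‖ = 1 := by simpa using hω
    have hv : ‖(-Real.sin θ) • pvec j k ω + Real.cos θ • qvec j k ω‖ ≤ 4 := by
      calc ‖(-Real.sin θ) • pvec j k ω + Real.cos θ • qvec j k ω‖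
          ≤ ‖(-Real.sin θ) • pvec j k ω‖ + ‖Real.cos θ • qvec j k ω‖ := norm_add_le _ _
        _ ≤ 1 * (2 * ‖ω‖) + 1 * (2 * ‖ω‖) := by
            rw [norm_smul, norm_smul]
            apply add_le_add
            · apply mul_le_mul _ (pvec_norm_le j k ω) (norm_nonneg _) zero_le_one
              rw [Real.norm_eq_abs, abs_neg]; exact Real.abs_sin_le_one θ
            · apply mul_le_mul _ (qvec_norm_le j k ω) (norm_nonneg _) zero_le_one
              rw [Real.norm_eq_abs]; exact Real.abs_cos_le_one θ
        _ = 4 := by rw [hω1]; ring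
    calc ‖F' θ ω‖ ≤ ‖fderiv ℝ G (rotMap j k θ ω)‖
          * ‖(-Real.sin θ) • pvec j k ω + Real.cos θ • qvec j k ω‖ :=
          (fderiv ℝ G (rotMap j k θ ω)).le_opNorm _
      _ ≤ |M| * 4 := by
          apply mul_le_mul _ hv (norm_nonneg _) (abs_nonneg M)
          exact le_trans (hM _ (hrot_sphere θ ω hω)) (le_abs_self M)
      _ = 4 * |M| := by ring
  -- differentiability in θ
  have h_diff : ∀ᵐ ω ∂μ, ∀ θ ∈ Metric.ball (0:ℝ) 1, HasDerivAt (F · ω) (F' θ ω) θ := by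
    rw [hμ, ae_restrict_iff' hSmeas]
    refine Filter.Eventually.of_forall (fun ω hω => ?_)
    intro θ _
    have hne : rotMap j k θ ω ≠ 0 := hSsub (hrot_sphere θ ω hω)
    exact (hGdiff _ hne).comp_hasDerivAt θ (hasDerivAt_rotMap j k hjk ω θ)
  -- dominated convergence for the derivative
  obtain ⟨hint, hder⟩ := hasDerivAt_integral_of_dominated_loc_of_deriv_le
    (s := Metric.ball (0:ℝ) 1) (Metric.ball_mem_nhds (0:ℝ) one_pos) (Filter.Eventually.of_forall hFmeas) hFint hF'meas h_bound
    (integrable_const _) h_diff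
  -- the integral is constant in θ
  have hconst : (fun θ => ∫ ω, F θ ω ∂μ) = fun _ => ∫ ω, G ω ∂μ := by
    refine funext fun θ => ?_
    rw [hμ]
    exact integral_rot_invariant j k hjk d θ G
  rw [hconst] at hder
  have hzero : (∫ ω, F' 0 ω ∂μ) = 0 := hder.unique (hasDerivAt_const 0 _)
  -- identify the integrand at θ = 0
  have hrot0 : ∀ ω : E, rotMap j k 0 ω = ω := by
    intro ω
    refine PiLp.ext fun i => ?_
    show rotMap j k 0 ω i = ω i
    simp only [rotMap, PiLp.toLp_apply, Real.cos_zero, Real.sin_zero]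
    split_ifs with h1 h2
    · subst h1; ring
    · subst h2; ring
    · rfl
  have hF'0 : F' 0 = fun ω => fderiv ℝ G ω (qvec j k ω) := by
    refine funext fun ω => ?_
    rw [hF']
    simp only [Real.sin_zero, Real.cos_zero, neg_zero, zero_smul, one_smul, zero_add, hrot0]
  rw [hF'0] at hzero
  exact hzero

end KeySec

noncomputable section EulerSec
variable {n : ℕ}

local notation "E" => EuclideanSpace ℝ (Fin n)

lemma euler_identity (g : E → ℝ)
    (hg : ContDiffOn ℝ (⊤ : ℕ∞) g {(0:E)}ᶜ)
    (hhom : ∀ t : ℝ, 0 < t → ∀ ξ : E, ξ ≠ 0 →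
      g (t • ξ) = t ^ ((1 : ℤ) - (n : ℤ)) * g ξ)
    (ω : E) (hω : ‖ω‖ = 1) :
    fderiv ℝ g ω ω = (1 - (n:ℝ)) * g ω := by
  have hω0 : ω ≠ 0 := by intro h; rw [h] at hω; simp at hω
  have hdiff : HasFDerivAt g (fderiv ℝ g ω) ω := by
    have hat : ContDiffAt ℝ (⊤:ℕ∞) g ω :=
      hg.contDiffAt ((isOpen_compl_singleton).mem_nhds hω0)
    exact (hat.differentiableAt (by simp)).hasFDerivAt
  have h1 : HasDerivAt (fun t : ℝ => g (t • ω)) (fderiv ℝ g ω ω) 1 := by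
    have hcurve : HasDerivAt (fun t : ℝ => t • ω) ω 1 := by
      simpa using (hasDerivAt_id (1:ℝ)).smul_const ω
    have hd2 : HasFDerivAt g (fderiv ℝ g ω) ((1:ℝ) • ω) := by rwa [one_smul]
    exact hd2.comp_hasDerivAt 1 hcurve
  have h2 : HasDerivAt (fun t : ℝ => t ^ ((1:ℤ) - (n:ℤ)) * g ω)
      ((1 - (n:ℝ)) * g ω) 1 := by
    have := (hasDerivAt_zpow ((1:ℤ) - (n:ℤ)) (1:ℝ) (Or.inl one_ne_zero)).mul_const (g ω)
    simpa using this
  have heq : (fun t : ℝ => g (t • ω)) =ᶠ[nhds 1] (fun t : ℝ => t ^ ((1:ℤ) - (n:ℤ)) * g ω) := by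
    filter_upwards [isOpen_Ioi.mem_nhds (mem_Ioi.2 one_pos)] with t ht
    exact hhom t ht ω hω0
  have h1' : HasDerivAt (fun t : ℝ => t ^ ((1:ℤ) - (n:ℤ)) * g ω) (fderiv ℝ g ω ω) 1 :=
    h1.congr_of_eventuallyEq heq.symm
  exact h1'.unique h2

lemma sum_coord_smul_single (ω : E) :
    ∑ i : Fin n, ω i • EuclideanSpace.single i (1:ℝ) = ω := by
  refine PiLp.ext fun i => ?_
  have h : (∑ l : Fin n, ω l • EuclideanSpace.single l (1:ℝ)) i
      = ∑ l : Fin n, (ω l • (EuclideanSpace.single l (1:ℝ) : E)) i :=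
    by rw [WithLp.ofLp_sum, Finset.sum_apply]
  rw [h]
  simp only [PiLp.smul_apply, EuclideanSpace.single_apply, smul_eq_mul]
  rw [Finset.sum_eq_single i]
  · simp
  · intro l _ hl
    rw [if_neg (Ne.symm hl)]; simp
  · simp

end EulerSec

open MeasureTheory


set_option maxHeartbeats 1000000 in
/-- Stokes-type identity underlying the trace property of Perrot's trace: if
`g : ℝ^n ∖ {0} → ℝ` is smooth and positively homogeneous of degree `1 − n`, then
the integral over the unit sphere (with respect to the `(n−1)`-dimensional
Hausdorff measure) of each partial derivative `∂g/∂ξ_j` vanishes. -/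
theorem integral_sphere_deriv_homogeneous_eq_zero
    (n : ℕ) (hn : 2 ≤ n)
    (g : EuclideanSpace ℝ (Fin n) → ℝ)
    (hg : ContDiffOn ℝ (⊤ : ℕ∞) g {(0 : EuclideanSpace ℝ (Fin n))}ᶜ)
    (hhom : ∀ t : ℝ, 0 < t → ∀ ξ : EuclideanSpace ℝ (Fin n), ξ ≠ 0 →
      g (t • ξ) = t ^ ((1 : ℤ) - (n : ℤ)) * g ξ)
    (j : Fin n) :
    ∫ ω in Metric.sphere (0 : EuclideanSpace ℝ (Fin n)) 1,
        fderiv ℝ g ω (EuclideanSpace.single j 1) ∂(μH[(n : ℝ) - 1]) = 0 := by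
  classical
  obtain ⟨m, rfl⟩ : ∃ m, n = m + 1 := ⟨n - 1, by omega⟩
  set d : ℝ := ((m+1 : ℕ) : ℝ) - 1 with hd
  have hdm : d = (m : ℝ) := by rw [hd]; push_cast; ring
  have hfin : μH[d] (Metric.sphere (0 : EuclideanSpace ℝ (Fin (m+1))) 1) < ⊤ := by
    rw [hdm]; exact sphere_hausdorff_lt_top m
  have hSmeas : MeasurableSet (Metric.sphere (0 : EuclideanSpace ℝ (Fin (m+1))) 1) :=
    (isClosed_sphere).measurableSet
  have hSsub : Metric.sphere (0 : EuclideanSpace ℝ (Fin (m+1))) 1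
      ⊆ {(0 : EuclideanSpace ℝ (Fin (m+1)))}ᶜ := by
    intro x hx
    simp only [mem_compl_iff, mem_singleton_iff]
    intro h; rw [h] at hx; simp at hx
  haveI hfinM : IsFiniteMeasure
      ((μH[d]).restrict (Metric.sphere (0 : EuclideanSpace ℝ (Fin (m+1))) 1)) :=
    ⟨by rw [Measure.restrict_apply_univ]; exact hfin⟩
  -- integrability helper
  have hIntOf : ∀ f : EuclideanSpace ℝ (Fin (m+1)) → ℝ,
      ContinuousOn f (Metric.sphere (0 : EuclideanSpace ℝ (Fin (m+1))) 1) →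
      IntegrableOn f (Metric.sphere (0 : EuclideanSpace ℝ (Fin (m+1))) 1) μH[d] := by
    intro f hf
    obtain ⟨C, hC⟩ := (isCompact_sphere (0 : EuclideanSpace ℝ (Fin (m+1))) 1).exists_bound_of_continuousOn hf
    refine Integrable.mono' (integrable_const C) (hf.aestronglyMeasurable hSmeas) ?_
    rw [ae_restrict_iff' hSmeas]
    exact Filter.Eventually.of_forall (fun ω hω => hC ω hω)
  -- the functions G_k
  set G : Fin (m+1) → EuclideanSpace ℝ (Fin (m+1)) → ℝ :=
    fun k ξ => g ξ * ξ k with hGdef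
  have hGk : ∀ k, ContDiffOn ℝ (⊤ : ℕ∞) (G k) {(0 : EuclideanSpace ℝ (Fin (m+1)))}ᶜ := by
    intro k
    have hc : ContDiffOn ℝ (⊤ : ℕ∞) (fun ξ : EuclideanSpace ℝ (Fin (m+1)) => ξ k)
        {(0 : EuclideanSpace ℝ (Fin (m+1)))}ᶜ := by
      exact (EuclideanSpace.proj (𝕜 := ℝ) k).contDiff.contDiffOn
    exact hg.mul hc
  -- differentiability of g away from 0
  have hgdiff : ∀ x : EuclideanSpace ℝ (Fin (m+1)), x ≠ 0 → DifferentiableAt ℝ g x := by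
    intro x hx
    exact ((hg.contDiffAt ((isOpen_compl_singleton).mem_nhds hx)).differentiableAt
      (by simp))
  -- key identity for each k ≠ j
  have hkey : ∀ k ∈ Finset.univ.erase j,
      ∫ ω in Metric.sphere (0 : EuclideanSpace ℝ (Fin (m+1))) 1,
        fderiv ℝ (G k) ω (qvec j k ω) ∂(μH[d]) = 0 := by
    intro k hk
    have hjk : j ≠ k := (Finset.mem_erase.1 hk).1.symm
    exact integral_fderiv_qvec j k hjk d hfin (G k) (hGk k)
  -- continuity of integrands
  have hfd : ∀ k, ContinuousOn (fun x => fderiv ℝ (G k) x)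
      ({(0 : EuclideanSpace ℝ (Fin (m+1)))}ᶜ) := by
    intro k
    exact (hGk k).continuousOn_fderiv_of_isOpen isOpen_compl_singleton (by exact_mod_cast le_top)
  have hconts : ∀ k, ContinuousOn
      (fun ω => fderiv ℝ (G k) ω (qvec j k ω))
      (Metric.sphere (0 : EuclideanSpace ℝ (Fin (m+1))) 1) := by
    intro k
    have hq : Continuous (qvec j k (n := m+1)) := by
      unfold qvec
      exact (((EuclideanSpace.proj k).continuous).smul continuous_const).sub
        (((EuclideanSpace.proj j).continuous).smul continuous_const)
    exact ((hfd k).mono hSsub).clm_apply hq.continuousOn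
  -- pointwise identity on the sphere
  have hptwise : ∀ ω ∈ Metric.sphere (0 : EuclideanSpace ℝ (Fin (m+1))) 1,
      ∑ k ∈ Finset.univ.erase j, fderiv ℝ (G k) ω (qvec j k ω)
        = fderiv ℝ g ω (EuclideanSpace.single j 1) := by
    intro ω hω
    have hω1 : ‖ω‖ = 1 := by simpa using hω
    have hω0 : ω ≠ 0 := hSsub hω
    set D := fderiv ℝ g ω with hD
    -- fderiv of G k
    have hGkval : ∀ (k : Fin (m+1)) (v : EuclideanSpace ℝ (Fin (m+1))),
        fderiv ℝ (G k) ω v = g ω * v k + ω k * D v := by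
      intro k v
      have h1 : fderiv ℝ (fun ξ : EuclideanSpace ℝ (Fin (m+1)) => g ξ * (EuclideanSpace.proj k) ξ) ω
          = g ω • fderiv ℝ (EuclideanSpace.proj k) ω + ((EuclideanSpace.proj k) ω) • fderiv ℝ g ω :=
        fderiv_mul (hgdiff ω hω0) ((EuclideanSpace.proj (𝕜 := ℝ) k).differentiableAt)
      have h2 : fderiv ℝ (EuclideanSpace.proj k : EuclideanSpace ℝ (Fin (m+1)) →L[ℝ] ℝ) ω
          = EuclideanSpace.proj k := ContinuousLinearMap.fderiv (EuclideanSpace.proj (𝕜 := ℝ) k)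
      have h3 : fderiv ℝ (G k) ω = g ω • (EuclideanSpace.proj k) + (ω k) • D := by
        rw [hD]
        show fderiv ℝ (fun ξ : EuclideanSpace ℝ (Fin (m+1)) => g ξ * (EuclideanSpace.proj k) ξ) ω = _
        rw [h1, h2]
        rfl
      rw [h3]
      simp only [ContinuousLinearMap.add_apply, ContinuousLinearMap.coe_smul',
        Pi.smul_apply, smul_eq_mul]
      rfl
    -- coordinates of qvec
    have hqk : ∀ k : Fin (m+1), k ≠ j → (qvec j k ω) k = -(ω j) := by
      intro k hkj
      show ω k * EuclideanSpace.single j (1:ℝ) k - ω j * EuclideanSpace.single k (1:ℝ) k = -(ω j)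
      rw [EuclideanSpace.single_apply, EuclideanSpace.single_apply, if_neg hkj, if_pos rfl]
      ring
    have hDq : ∀ k : Fin (m+1),
        D (qvec j k ω) = ω k * D (EuclideanSpace.single j 1) - ω j * D (EuclideanSpace.single k 1) := by
      intro k
      unfold qvec
      rw [D.map_sub, D.map_smul, D.map_smul]
      rfl
    have hterm : ∀ k ∈ Finset.univ.erase j,
        fderiv ℝ (G k) ω (qvec j k ω)
          = -(g ω * ω j) + ((ω k)^2 * D (EuclideanSpace.single j 1)
              - ω j * (ω k * D (EuclideanSpace.single k 1))) := by
      intro k hk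
      have hkj : k ≠ j := (Finset.mem_erase.1 hk).1
      rw [hGkval k (qvec j k ω), hqk k hkj, hDq k]
      ring
    rw [Finset.sum_congr rfl hterm]
    rw [Finset.sum_add_distrib, Finset.sum_sub_distrib, Finset.sum_const,
      Finset.card_erase_of_mem (Finset.mem_univ j), Finset.card_univ, Fintype.card_fin]
    rw [← Finset.sum_mul, ← Finset.mul_sum]
    -- auxiliary sums
    have hsumsq : ∑ i : Fin (m+1), (ω i)^2 = 1 := by
      have h0 := EuclideanSpace.norm_eq ω
      rw [hω1] at h0
      have h2 : Real.sqrt (∑ i, ω i ^ 2) = 1 := by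
        rw [← h0.symm]
        congr 1
        exact Finset.sum_congr rfl (fun i _ => by rw [Real.norm_eq_abs, sq_abs])
      nlinarith [Real.sq_sqrt (Finset.sum_nonneg (fun i (_ : i ∈ Finset.univ) => sq_nonneg (ω i))),
        h2]
    have hs1 : ∑ k ∈ Finset.univ.erase j, (ω k)^2 = 1 - (ω j)^2 := by
      rw [Finset.sum_erase_eq_sub (Finset.mem_univ j), hsumsq]
    have hall : ∑ k : Fin (m+1), ω k * D (EuclideanSpace.single k 1) = D ω := by
      calc ∑ k : Fin (m+1), ω k * D (EuclideanSpace.single k 1)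
          = ∑ k : Fin (m+1), D (ω k • EuclideanSpace.single k 1) := by
            refine Finset.sum_congr rfl (fun k _ => ?_)
            rw [D.map_smul]; rfl
        _ = D (∑ k : Fin (m+1), ω k • EuclideanSpace.single k 1) :=
            (map_sum D _ _).symm
        _ = D ω := by rw [sum_coord_smul_single]
    have heuler : D ω = (1 - ((m+1 : ℕ):ℝ)) * g ω := by
      rw [hD]
      exact euler_identity g hg hhom ω hω1
    have hs2 : ∑ k ∈ Finset.univ.erase j, ω k * D (EuclideanSpace.single k 1)
        = (1 - ((m+1 : ℕ):ℝ)) * g ω - ω j * D (EuclideanSpace.single j 1) := by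
      rw [Finset.sum_erase_eq_sub (Finset.mem_univ j), hall, heuler]
    rw [hs1, hs2, nsmul_eq_mul]
    push_cast
    ring
  -- assembling
  have hIntEach : ∀ k ∈ Finset.univ.erase j,
      IntegrableOn (fun ω => fderiv ℝ (G k) ω (qvec j k ω))
        (Metric.sphere (0 : EuclideanSpace ℝ (Fin (m+1))) 1) μH[d] :=
    fun k _ => hIntOf _ (hconts k)
  calc ∫ ω in Metric.sphere (0 : EuclideanSpace ℝ (Fin (m+1))) 1,
        fderiv ℝ g ω (EuclideanSpace.single j 1) ∂(μH[d])
      = ∫ ω in Metric.sphere (0 : EuclideanSpace ℝ (Fin (m+1))) 1,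
          ∑ k ∈ Finset.univ.erase j, fderiv ℝ (G k) ω (qvec j k ω) ∂(μH[d]) :=
        setIntegral_congr_fun hSmeas (fun ω hω => (hptwise ω hω).symm)
    _ = ∑ k ∈ Finset.univ.erase j, ∫ ω in Metric.sphere (0 : EuclideanSpace ℝ (Fin (m+1))) 1,
          fderiv ℝ (G k) ω (qvec j k ω) ∂(μH[d]) :=
        integral_finset_sum _ (fun k hk => hIntEach k hk)
    _ = 0 := Finset.sum_eq_zero hkey
end
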